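/- arXiv:1908.08125 — 5 statements merged into one kernel-verified Lean document; each statement's English description precedes it below -/
import Mathlib

section
/- Let G be a group and (G_i)_{i∈I} a family of subgroups of G. Then the following are equivalent: (i) the subgroups (G_i)_{i∈I} are free in G, i.e. for all k ∈ ℕ, all i(1), …, i(k) ∈ I with i(1) ≠ i(2), i(2) ≠ i(3), …, i(k−1) ≠ i(k), and all g_1, …, g_k with g_j ∈ G_{i(j)} and g_j ≠ e for j = 1, …, k, one has g_1 ⋯ g_k ≠ e; (ii) the unital subalgebras (ℂG_i)_{i∈I} are freely independent in the non-commutative probability space (ℂG, τ_G). -/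
open scoped BigOperators

/-- A family of unital subalgebras `(S i)_{i ∈ I}` of a unital complex algebra is *freely
independent* with respect to a unital linear functional `φ`: `φ (a₁ ⋯ a_k) = 0` whenever
neighbouring factors come from different subalgebras and all factors are centered. -/
def FreeFamily {A : Type*} [Ring A] [Algebra ℂ A] {I : Type*}
    (φ : A →ₗ[ℂ] ℂ) (S : I → Subalgebra ℂ A) : Prop :=
  ∀ (k : ℕ) (i : Fin (k + 1) → I) (a : Fin (k + 1) → A),
    (∀ j : Fin k, i j.castSucc ≠ i j.succ) →
    (∀ j, a j ∈ S (i j)) →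
    (∀ j, φ (a j) = 0) →
    φ (List.ofFn a).prod = 0

/-- The functional `τ_G` on the group algebra `ℂG`, reading off the coefficient of the
neutral element. -/
noncomputable def tauG (G : Type*) [Group G] : MonoidAlgebra ℂ G →ₗ[ℂ] ℂ :=
  Finsupp.lapply (1 : G) ∘ₗ (MonoidAlgebra.coeffLinearEquiv ℂ).toLinearMap

/-- The unital subalgebra `ℂ G_i` of `ℂ G` corresponding to a subgroup `H ≤ G`. -/
noncomputable def groupSubalgebra (G : Type*) [Group G] (H : Subgroup G) :
    Subalgebra ℂ (MonoidAlgebra ℂ G) :=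
  Algebra.adjoin ℂ (MonoidAlgebra.of ℂ G '' (H : Set G))

/-!
`τ_G` reads off the coefficient of `e`, and `ℂG_i` consists of the elements supported on `G_i`,
so a centred element of `ℂG_i` is supported on `G_i \ {e}`. The support of a product
`a₁ ⋯ a_k` lies among the products `g₁ ⋯ g_k` with `g_j` in the support of `a_j`; hence if the
subgroups are free, `e` is not in the support of an alternating product of centred elements.
Conversely, point masses at nontrivial `g_j ∈ G_{i(j)}` are centred, and `τ_G` of their product
is `1` when `g₁ ⋯ g_k = e`.
-/

open MonoidAlgebra
open scoped Pointwise

lemma support_coeff_list_prod_subset {k G : Type*} [Semiring k] [Monoid G] [DecidableEq G]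
    (l : List (MonoidAlgebra k G)) :
    l.prod.coeff.support ⊆ (l.map fun a => a.coeff.support).prod := by
  induction l with
  | nil => exact Finsupp.support_single_subset
  | cons a l ih =>
    rw [List.prod_cons, List.map_cons, List.prod_cons]
    exact (support_coeff_mul_subset _ _).trans (Finset.mul_subset_mul_left ih)

section GroupAlgebra

variable {G : Type*} [Group G]

lemma tauG_apply (a : MonoidAlgebra ℂ G) : tauG G a = a.coeff 1 := rfl

lemma tauG_one : tauG G 1 = 1 := by
  simp [tauG_apply]

lemma tauG_of_ne_one {g : G} (hg : g ≠ 1) : tauG G (of ℂ G g) = 0 :=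
  Finsupp.single_eq_of_ne' hg

lemma groupSubalgebra_toSubmodule (H : Subgroup G) :
    Subalgebra.toSubmodule (groupSubalgebra G H) = supported ℂ ℂ (H : Set G) := by
  rw [groupSubalgebra, Algebra.adjoin_eq_span, supported_eq_span_single,
    ← MonoidHom.map_mclosure, ← Subgroup.coe_toSubmonoid, Submonoid.closure_eq]
  rfl

lemma mem_groupSubalgebra {H : Subgroup G} {a : MonoidAlgebra ℂ G} :
    a ∈ groupSubalgebra G H ↔ ↑a.coeff.support ⊆ (H : Set G) := by
  rw [← Subalgebra.mem_toSubmodule, groupSubalgebra_toSubmodule, mem_supported]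

end GroupAlgebra

/-- Subgroups `(G_i)_{i ∈ I}` of a group `G` are free in the group-theoretical sense if and
only if the unital subalgebras `(ℂ G_i)_{i ∈ I}` are freely independent in the
non-commutative probability space `(ℂ G, τ_G)`. -/
theorem subgroups_free_iff_group_subalgebras_free
    {G : Type*} [Group G] {I : Type*} (Gi : I → Subgroup G) :
    (∀ (k : ℕ) (i : Fin (k + 1) → I) (g : Fin (k + 1) → G),
        (∀ j : Fin k, i j.castSucc ≠ i j.succ) →
        (∀ j, g j ∈ Gi (i j)) →
        (∀ j, g j ≠ 1) →
        (List.ofFn g).prod ≠ 1)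
      ↔ FreeFamily (tauG G) (fun i => groupSubalgebra G (Gi i)) := by
  classical
  constructor
  · intro hfree k i a halt hmem hτ
    by_contra hne
    have one_mem : (1 : G) ∈ (List.ofFn fun j => (a j).coeff.support).prod := by
      have hsupp := support_coeff_list_prod_subset (List.ofFn a)
      rw [List.map_ofFn] at hsupp
      exact hsupp (Finsupp.mem_support_iff.mpr hne)
    obtain ⟨g, hg⟩ := Finset.mem_prod_list_ofFn.mp one_mem
    refine hfree k i (fun j => g j) halt (fun j => mem_groupSubalgebra.mp (hmem j) (g j).2)
      (fun j hj => ?_) hg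
    exact Finsupp.mem_support_iff.mp (hj ▸ (g j).2) (hτ j)
  · intro hfree k i g halt hg hne hprod
    have hτ := hfree k i (fun j => of ℂ G (g j)) halt
      (fun j => Algebra.subset_adjoin ⟨g j, hg j, rfl⟩) (fun j => tauG_of_ne_one (hne j))
    rw [← Function.comp_def, ← List.map_ofFn, ← map_list_prod, hprod, map_one, tauG_one] at hτ
    exact one_ne_zero hτ
end

section
/- Let (𝒜, φ) be a non-commutative probability space with free cumulants (κ_n)_{n∈ℕ}. Let n ≥ 2 and a_1, …, a_n ∈ 𝒜. If a_i = 1 for at least one i ∈ {1, …, n}, then κ_n(a_1, …, a_n) = 0. -/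
open scoped BigOperators

/-- Two points lie in the same block of a partition of `{1, …, n}`. -/
def SameBlock {n : ℕ} (π : Finpartition (Finset.univ : Finset (Fin n))) (p q : Fin n) : Prop :=
  ∃ B ∈ π.parts, p ∈ B ∧ q ∈ B

/-- A partition of `{1, …, n}` is non-crossing if there are no `p₁ < q₁ < p₂ < q₂` with
`p₁ ∼ p₂`, `q₁ ∼ q₂` and `p₁ ≁ q₁`. -/
def IsNonCrossing {n : ℕ} (π : Finpartition (Finset.univ : Finset (Fin n))) : Prop :=
  ¬ ∃ p₁ q₁ p₂ q₂ : Fin n, p₁ < q₁ ∧ q₁ < p₂ ∧ p₂ < q₂ ∧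
      SameBlock π p₁ p₂ ∧ SameBlock π q₁ q₂ ∧ ¬ SameBlock π p₁ q₁

/-- `μ` is the Möbius function of the poset `NC(n)` of non-crossing partitions, ordered
by reversed refinement: `μ(π, π) = 1` and for `π < σ` one has
`∑_{τ ∈ NC(n), π ≤ τ ≤ σ} μ(π, τ) = 0` (equivalently, `μ(π,σ) = -∑_{π ≤ τ < σ} μ(π,τ)`). -/
def IsMoebiusNC (n : ℕ)
    (μ : Finpartition (Finset.univ : Finset (Fin n)) →
         Finpartition (Finset.univ : Finset (Fin n)) → ℂ) : Prop :=
  (∀ π, IsNonCrossing π → μ π π = 1) ∧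
  (∀ π σ, IsNonCrossing π → IsNonCrossing σ → π ≤ σ → π ≠ σ →
    ∑ᶠ τ ∈ {τ : Finpartition (Finset.univ : Finset (Fin n)) |
        IsNonCrossing τ ∧ π ≤ τ ∧ τ ≤ σ}, μ π τ = 0)

/-- The factorized moment `φ_π(a₁, …, a_n) = ∏_{V ∈ π} φ(a_{i₁} ⋯ a_{i_s})`, where the
elements of each block are multiplied in increasing order. -/
noncomputable def phiPart {A : Type*} [Ring A] [Algebra ℂ A] (φ : A →ₗ[ℂ] ℂ)
    {n : ℕ} (π : Finpartition (Finset.univ : Finset (Fin n))) (a : Fin n → A) : ℂ :=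
  ∏ B ∈ π.parts, φ ((B.sort (· ≤ ·)).map a).prod

/-- The free cumulant `κ_n(a₁, …, a_n) = ∑_{π ∈ NC(n)} φ_π(a₁, …, a_n) μ(π, 1_n)`, with
`μ` the Möbius function of `NC(n)` and `1_n = ⊤` the partition with one block. -/
noncomputable def freeCumulant {A : Type*} [Ring A] [Algebra ℂ A] (φ : A →ₗ[ℂ] ℂ)
    {n : ℕ}
    (μ : Finpartition (Finset.univ : Finset (Fin n)) →
         Finpartition (Finset.univ : Finset (Fin n)) → ℂ)
    (a : Fin n → A) : ℂ :=
  ∑ᶠ π ∈ {π : Finpartition (Finset.univ : Finset (Fin n)) | IsNonCrossing π},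
    phiPart φ π a * μ π ⊤

/-!
Since `a i = 1` and `φ 1 = 1`, the factorized moment `φ_π(a)` only depends on the partition
`π \ {i}` of `{1, …, n} \ {i}` obtained by removing `i`. It therefore suffices that every fibre
sum `F σ = ∑_{π ∈ NC(n), π \ {i} = σ} μ(π, 1_n)` vanishes. Adjoining `{i}` as a singleton block
is left adjoint to removing `i`, and `(π \ {i}) ∪ {{i}}` is non-crossing whenever `π` is. So if
the fibre of `σ` is nonempty, then `σ ∪ {{i}} ∈ NC(n)` and
`∑_{τ ≥ σ} F τ = ∑_{π ∈ NC(n), π ≥ σ ∪ {{i}}} μ(π, 1_n)`, which vanishes by the Möbius relation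
in the second variable because `σ ∪ {{i}} ≠ 1_n` for `n ≥ 2`. Downward induction on `σ` then
gives `F σ = 0`.

The Möbius relation `∑_{ρ ≤ π ≤ σ} μ(π, σ) = δ_{ρσ}` in the second variable follows from the
defining recursion in the first variable: that recursion says `μ * ζ = 1` in the incidence algebra
of `NC(n)`, so `μ` is the two-sided inverse of `ζ`.
-/

open Finset

namespace List

theorem prod_map_erase_of_eq_one {α M : Type*} [DecidableEq α] [Monoid M] {f : α → M} {a : α}
    (ha : f a = 1) (l : List α) : ((l.erase a).map f).prod = (l.map f).prod := by
  induction l with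
  | nil => rfl
  | cons b l ih =>
    by_cases hb : b = a
    · subst hb
      simp [ha]
    · simp [hb, ih]

end List

theorem Finset.sort_erase {α : Type*} [LinearOrder α] (s : Finset α) (a : α) :
    (s.erase a).sort (· ≤ ·) = (s.sort (· ≤ ·)).erase a := by
  refine List.Perm.eq_of_pairwise' (Finset.pairwise_sort _ _)
    ((Finset.pairwise_sort _ _).sublist List.erase_sublist) ?_
  rw [← Multiset.coe_eq_coe, ← Multiset.coe_erase, Finset.sort_eq, Finset.sort_eq,
    Finset.erase_val]

namespace IncidenceAlgebra

theorem sum_Icc_left_of_sum_Icc_right {𝕜 α : Type*} [Ring 𝕜] [PartialOrder α]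
    [LocallyFiniteOrder α] [DecidableEq α] (f : α → α → 𝕜)
    (hf : ∀ a b, ∑ x ∈ Icc a b, f a x = if a = b then 1 else 0) (a b : α) :
    ∑ x ∈ Icc a b, f x b = if a = b then 1 else 0 := by
  classical
  let F : IncidenceAlgebra 𝕜 α := ⟨fun a b ↦ if a ≤ b then f a b else 0, fun _ _ h ↦ if_neg h⟩
  have hF : F * zeta 𝕜 = 1 := by
    ext a b -
    rw [mul_apply, one_apply, ← hf]
    refine sum_congr rfl fun x hx ↦ ?_
    rw [mem_Icc] at hx
    simp [F, hx.1, hx.2]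
  have hFmu : F = mu 𝕜 := by
    rw [← mul_one F, ← zeta_mul_mu, ← mul_assoc, hF, one_mul]
  rw [← sum_Icc_mu_left, ← hFmu]
  refine sum_congr rfl fun x hx ↦ ?_
  simp [F, (mem_Icc.1 hx).2]

end IncidenceAlgebra

theorem eq_zero_of_sum_ge_eq_zero {α M : Type*} [PartialOrder α] [Fintype α] [DecidableLE α]
    [AddCommMonoid M] {f : α → M} (hf : ∀ a, f a ≠ 0 → ∑ b with a ≤ b, f b = 0) (a : α) :
    f a = 0 := by
  induction a using WellFoundedGT.induction with
  | _ a ih =>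
    by_contra ha
    refine ha ((sum_eq_single_of_mem a (by simp) fun b hb hba ↦ ?_).symm.trans (hf a ha))
    exact ih b (lt_of_le_of_ne (mem_filter.1 hb).2 (Ne.symm hba))

namespace Finpartition

variable {α : Type*} [DecidableEq α] {s : Finset α} {i : α}

theorem prod_avoid_singleton_parts {M : Type*} [CommMonoid M] (P : Finpartition s) (i : α)
    {f : Finset α → M} (h_empty : f ∅ = 1) (h_erase : ∀ B, f (B.erase i) = f B) :
    ∏ B ∈ (P.avoid {i}).parts, f B = ∏ B ∈ P.parts, f B := by
  have hinj : Set.InjOn (· \ {i}) (P.parts : Set (Finset α)) := by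
    intro B hB B' hB' (h : B \ {i} = B' \ {i})
    by_contra hne
    have hdisj := (P.disjoint hB hB' hne).mono (sdiff_le (a := B) (b := {i}))
      (h.trans_le sdiff_le)
    have hB_sub : B ⊆ {i} := sdiff_eq_empty_iff_subset.1 (disjoint_self.1 hdisj)
    have hB'_sub : B' ⊆ {i} := sdiff_eq_empty_iff_subset.1 (h ▸ disjoint_self.1 hdisj)
    exact hne (((P.nonempty_of_mem_parts hB).subset_singleton_iff.1 hB_sub).trans
      ((P.nonempty_of_mem_parts hB').subset_singleton_iff.1 hB'_sub).symm)
  have hparts : (P.avoid {i}).parts = (P.parts.image (· \ {i})).erase ∅ := by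
    simp [avoid]
  rw [hparts, prod_erase _ h_empty, prod_image hinj]
  simp only [sdiff_singleton_eq_erase, h_erase]

def extendSingleton (σ : Finpartition (s \ {i})) (hi : i ∈ s) : Finpartition s :=
  σ.extend (singleton_ne_empty i) sdiff_disjoint
    (by rw [sup_eq_union, sdiff_union_of_subset (singleton_subset_iff.2 hi)])

theorem extendSingleton_le_iff {σ : Finpartition (s \ {i})} (hi : i ∈ s) {P : Finpartition s} :
    σ.extendSingleton hi ≤ P ↔ σ ≤ P.avoid {i} := by
  constructor
  · intro h C hC
    obtain ⟨B, hB, hCB⟩ := h (mem_insert_of_mem hC : C ∈ (σ.extendSingleton hi).parts)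
    have hC_sub : C ⊆ s \ {i} := σ.le hC
    obtain ⟨x, hx⟩ := σ.nonempty_of_mem_parts hC
    refine ⟨B \ {i}, (mem_avoid _).2 ⟨B, hB, fun hBi ↦ ?_, rfl⟩, subset_sdiff.2 ⟨hCB, ?_⟩⟩
    · exact (mem_sdiff.1 (hC_sub hx)).2 (hBi (hCB hx))
    · exact (subset_sdiff.1 hC_sub).2
  · intro h C hC
    obtain rfl | hC := mem_insert.1 hC
    · obtain ⟨B, hB, hiB⟩ := P.exists_mem hi
      exact ⟨B, hB, singleton_subset_iff.2 hiB⟩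
    · obtain ⟨D, hD, hCD⟩ := h hC
      obtain ⟨B, hB, -, rfl⟩ := (mem_avoid _).1 hD
      exact ⟨B, hB, hCD.trans sdiff_subset⟩

theorem extendSingleton_ne_top (σ : Finpartition (s \ {i})) (hi : i ∈ s) {j : α} (hj : j ∈ s)
    (hji : j ≠ i) : σ.extendSingleton hi ≠ ⊤ := by
  intro h
  have hi_top : {i} ∈ (⊤ : Finpartition s).parts := h ▸ mem_insert_self _ _
  have hs : {i} = s := mem_singleton.1 (parts_top_subset s hi_top)
  exact hji (mem_singleton.1 (hs ▸ hj))

end Finpartition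

variable {n : ℕ}

theorem sameBlock_extendSingleton_avoid_iff (π : Finpartition (univ : Finset (Fin n))) (i : Fin n)
    {p q : Fin n} :
    SameBlock ((π.avoid {i}).extendSingleton (mem_univ i)) p q ↔
      p = q ∨ p ≠ i ∧ q ≠ i ∧ SameBlock π p q := by
  constructor
  · rintro ⟨C, hC, hpC, hqC⟩
    obtain rfl | hC := mem_insert.1 hC
    · exact Or.inl ((mem_singleton.1 hpC).trans (mem_singleton.1 hqC).symm)
    · obtain ⟨B, hB, -, rfl⟩ := (Finpartition.mem_avoid _).1 hC
      simp only [mem_sdiff, mem_singleton] at hpC hqC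
      exact Or.inr ⟨hpC.2, hqC.2, B, hB, hpC.1, hqC.1⟩
  · rintro (rfl | ⟨hp, hq, B, hB, hpB, hqB⟩)
    · obtain ⟨C, hC, hpC⟩ := Finpartition.exists_mem _ (mem_univ p)
      exact ⟨C, hC, hpC, hpC⟩
    · refine ⟨B \ {i}, mem_insert_of_mem ((Finpartition.mem_avoid _).2 ⟨B, hB, ?_, rfl⟩), ?_, ?_⟩
      · exact fun hBi ↦ hp (mem_singleton.1 (hBi hpB))
      · simpa [hp] using hpB
      · simpa [hq] using hqB

theorem IsNonCrossing.extendSingleton_avoid {π : Finpartition (univ : Finset (Fin n))}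
    (hπ : IsNonCrossing π) (i : Fin n) :
    IsNonCrossing ((π.avoid {i}).extendSingleton (mem_univ i)) := by
  rintro ⟨p₁, q₁, p₂, q₂, h₁, h₂, h₃, hp, hq, hpq⟩
  simp only [sameBlock_extendSingleton_avoid_iff] at hp hq hpq
  obtain ⟨hp₁, -, hp⟩ := hp.resolve_left (h₁.trans h₂).ne
  obtain ⟨hq₁, -, hq⟩ := hq.resolve_left (h₂.trans h₃).ne
  exact hπ ⟨p₁, q₁, p₂, q₂, h₁, h₂, h₃, hp, hq, fun h ↦ hpq (Or.inr ⟨hp₁, hq₁, h⟩)⟩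

theorem isNonCrossing_top : IsNonCrossing (⊤ : Finpartition (univ : Finset (Fin n))) := by
  rintro ⟨p₁, q₁, -, -, -, -, -, -, -, hpq⟩
  obtain ⟨B, hB, hpB⟩ := (⊤ : Finpartition (univ : Finset (Fin n))).exists_mem (mem_univ p₁)
  have hB_univ : B = univ := mem_singleton.1 (Finpartition.parts_top_subset _ hB)
  exact hpq ⟨B, hB, hpB, hB_univ ▸ mem_univ q₁⟩

open scoped Classical

abbrev NCPartition (n : ℕ) := {π : Finpartition (univ : Finset (Fin n)) // IsNonCrossing π}

noncomputable instance : LocallyFiniteOrder (NCPartition n) := Fintype.toLocallyFiniteOrder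

namespace IsMoebiusNC

variable {μ : Finpartition (univ : Finset (Fin n)) → Finpartition (univ : Finset (Fin n)) → ℂ}

theorem sum_Icc_right (hμ : IsMoebiusNC n μ) (a b : NCPartition n) :
    ∑ x ∈ Icc a b, μ a x = if a = b then 1 else 0 := by
  by_cases hab : a = b
  · subst hab
    simp [hμ.1 a a.2]
  by_cases hle : a ≤ b
  · have hset : {τ | IsNonCrossing τ ∧ a.1 ≤ τ ∧ τ ≤ b.1} =
        Subtype.val '' (Icc a b : Set (NCPartition n)) := by
      ext τ
      simp only [Set.mem_ofPred_eq, coe_Icc, Set.mem_image, Set.mem_Icc]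
      exact ⟨fun ⟨hτ, h⟩ ↦ ⟨⟨τ, hτ⟩, h, rfl⟩, by rintro ⟨τ, h, rfl⟩; exact ⟨τ.2, h⟩⟩
    have h := hμ.2 a b a.2 b.2 hle (Subtype.coe_ne_coe.2 hab)
    rw [if_neg hab]
    rwa [hset, finsum_mem_image Subtype.val_injective.injOn, finsum_mem_coe_finset] at h
  · rw [Icc_eq_empty hle, sum_empty, if_neg hab]

theorem sum_ge_apply_top_eq_zero (hμ : IsMoebiusNC n μ) {ρ : NCPartition n} (hρ : ρ.1 ≠ ⊤) :
    ∑ π : NCPartition n with ρ ≤ π, μ π ⊤ = 0 := by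
  have h := IncidenceAlgebra.sum_Icc_left_of_sum_Icc_right _ hμ.sum_Icc_right ρ
    ⟨⊤, isNonCrossing_top⟩
  rw [if_neg (fun h ↦ hρ (congrArg Subtype.val h))] at h
  rw [← h]
  congr 1
  ext π
  simp only [mem_Icc, mem_filter, mem_univ, true_and]
  exact (and_iff_left (le_top : π.1 ≤ ⊤)).symm

theorem sum_avoid_eq_zero (hμ : IsMoebiusNC n μ) (hn : 2 ≤ n) (i : Fin n)
    (σ : Finpartition (univ \ {i} : Finset (Fin n))) :
    ∑ π : NCPartition n with π.1.avoid {i} = σ, μ π ⊤ = 0 := by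
  refine eq_zero_of_sum_ge_eq_zero
    (f := fun τ ↦ ∑ π : NCPartition n with π.1.avoid {i} = τ, μ π ⊤) (fun τ hτ ↦ ?_) σ
  obtain ⟨π, hπ, -⟩ := exists_ne_zero_of_sum_ne_zero hτ
  have hτ_nc : IsNonCrossing (τ.extendSingleton (mem_univ i)) :=
    (mem_filter.1 hπ).2 ▸ π.2.extendSingleton_avoid i
  obtain ⟨j, hji⟩ := Fintype.exists_ne_of_one_lt_card (by rw [Fintype.card_fin]; omega) i
  calc ∑ ρ with τ ≤ ρ, ∑ π : NCPartition n with π.1.avoid {i} = ρ, μ π ⊤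
      = ∑ π : NCPartition n with τ ≤ π.1.avoid {i}, μ π ⊤ := by
        rw [sum_fiberwise_eq_sum_filter]
        simp only [mem_filter, mem_univ, true_and]
    _ = ∑ π : NCPartition n with ⟨_, hτ_nc⟩ ≤ π, μ π ⊤ := by
        congr 1
        ext π
        simp only [mem_filter, mem_univ, true_and, ← Subtype.coe_le_coe,
          Finpartition.extendSingleton_le_iff]
    _ = 0 :=
        hμ.sum_ge_apply_top_eq_zero (τ.extendSingleton_ne_top (mem_univ i) (mem_univ j) hji)

end IsMoebiusNC

theorem phiPart_eq_prod_avoid {A : Type*} [Ring A] [Algebra ℂ A] {φ : A →ₗ[ℂ] ℂ} (hφ1 : φ 1 = 1)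
    {a : Fin n → A} {i : Fin n} (hi : a i = 1) (π : Finpartition (univ : Finset (Fin n))) :
    phiPart φ π a = ∏ B ∈ (π.avoid {i}).parts, φ ((B.sort (· ≤ ·)).map a).prod :=
  (Finpartition.prod_avoid_singleton_parts π i (by simp [hφ1])
    fun B ↦ by rw [sort_erase, List.prod_map_erase_of_eq_one hi]).symm

theorem freeCumulant_eq_sum {A : Type*} [Ring A] [Algebra ℂ A] (φ : A →ₗ[ℂ] ℂ)
    (μ : Finpartition (univ : Finset (Fin n)) → Finpartition (univ : Finset (Fin n)) → ℂ)
    (a : Fin n → A) :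
    freeCumulant φ μ a = ∑ π : NCPartition n, phiPart φ π.1 a * μ π ⊤ := by
  rw [freeCumulant, ← finsum_set_coe_eq_finsum_mem, finsum_eq_sum_of_fintype]
  rfl

/-- Free cumulants of order `n ≥ 2` vanish as soon as one of the arguments is the unit:
if `a_i = 1` for some `i`, then `κ_n(a₁, …, a_n) = 0`. -/
theorem freeCumulant_eq_zero_of_one_mem
    {A : Type*} [Ring A] [Algebra ℂ A]
    (φ : A →ₗ[ℂ] ℂ) (hφ1 : φ 1 = 1)
    {n : ℕ} (hn : 2 ≤ n)
    (μ : Finpartition (Finset.univ : Finset (Fin n)) →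
         Finpartition (Finset.univ : Finset (Fin n)) → ℂ)
    (hμ : IsMoebiusNC n μ)
    (a : Fin n → A) (i : Fin n) (hi : a i = 1) :
    freeCumulant φ μ a = 0 := by
  rw [freeCumulant_eq_sum, ← sum_fiberwise univ (fun π : NCPartition n ↦ π.1.avoid {i})]
  refine sum_eq_zero fun σ _ ↦ ?_
  calc ∑ π : NCPartition n with π.1.avoid {i} = σ, phiPart φ π.1 a * μ π ⊤
      = ∑ π : NCPartition n with π.1.avoid {i} = σ,
          (∏ B ∈ σ.parts, φ ((B.sort (· ≤ ·)).map a).prod) * μ π ⊤ :=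
        sum_congr rfl fun π hπ ↦ by rw [phiPart_eq_prod_avoid hφ1 hi, (mem_filter.1 hπ).2]
    _ = 0 := by rw [← mul_sum, hμ.sum_avoid_eq_zero hn i σ, mul_zero]
end

section
/- For each n ∈ ℕ, the partially ordered set NC(n) of non-crossing partitions of {1, …, n}, ordered by reversed refinement, is a lattice: any two π, σ ∈ NC(n) have a greatest lower bound π ∧ σ and a least upper bound π ∨ σ in NC(n). Moreover, the meet is given blockwise by intersection: for all p, q ∈ {1, …, n}, p ∼_{π∧σ} q if and only if p ∼_π q and p ∼_σ q. -/
open scoped BigOperators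

/-!
Relating points by "same block in every member of a family" is again an equivalence relation, and
a crossing for it would already be a crossing in the member that separates `p₁` from `q₁`.  So the
common refinement of any family of non-crossing partitions is non-crossing: for two partitions it
is their meet, and for the family of all non-crossing upper bounds of `π` and `σ` it is their join.
-/

section CommonRefinement

variable {n : ℕ}

theorem sameBlock_iff_mem_part (π : Finpartition (Finset.univ : Finset (Fin n))) (p q : Fin n) :
    SameBlock π p q ↔ q ∈ π.part p := by
  rw [Finpartition.mem_part_iff_exists]
  exact exists_congr fun _ => and_congr_right fun _ => and_comm

theorem sameBlock_equivalence (π : Finpartition (Finset.univ : Finset (Fin n))) :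
    Equivalence (SameBlock π) where
  refl p := (sameBlock_iff_mem_part π p p).2 (π.mem_part (Finset.mem_univ p))
  symm := fun ⟨B, hB, hp, hq⟩ => ⟨B, hB, hq, hp⟩
  trans := fun ⟨B, hB, hp, hq⟩ ⟨_, hC, hq', hr⟩ =>
    ⟨B, hB, hp, π.eq_of_mem_parts hC hB hq' hq ▸ hr⟩

theorem le_iff_sameBlock_imp {π σ : Finpartition (Finset.univ : Finset (Fin n))} :
    π ≤ σ ↔ ∀ p q, SameBlock π p q → SameBlock σ p q := by
  constructor
  · rintro h p q ⟨B, hB, hp, hq⟩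
    obtain ⟨C, hC, hBC⟩ := h hB
    exact ⟨C, hC, hBC hp, hBC hq⟩
  · intro h B hB
    obtain ⟨p, hp⟩ := π.nonempty_of_mem_parts hB
    refine ⟨σ.part p, σ.part_mem.2 (Finset.mem_univ p), fun q hq => ?_⟩
    exact (sameBlock_iff_mem_part σ p q).1 (h p q ⟨B, hB, hp, hq⟩)

noncomputable def Finpartition.ofEquivalence (r : Fin n → Fin n → Prop) (hr : Equivalence r) :
    Finpartition (Finset.univ : Finset (Fin n)) := by
  classical exact Finpartition.ofSetoid ⟨r, hr⟩

theorem sameBlock_ofEquivalence {r : Fin n → Fin n → Prop} (hr : Equivalence r) (p q : Fin n) :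
    SameBlock (Finpartition.ofEquivalence r hr) p q ↔ r p q := by
  classical
  rw [sameBlock_iff_mem_part, Finpartition.ofEquivalence, Finpartition.mem_part_ofSetoid_iff_rel]
  rfl

noncomputable def commonRefinement (S : Set (Finpartition (Finset.univ : Finset (Fin n)))) :
    Finpartition (Finset.univ : Finset (Fin n)) :=
  Finpartition.ofEquivalence (fun p q => ∀ ρ ∈ S, SameBlock ρ p q)
    ⟨fun p ρ _ => (sameBlock_equivalence ρ).refl p,
     fun h ρ hρ => (sameBlock_equivalence ρ).symm (h ρ hρ),
     fun h h' ρ hρ => (sameBlock_equivalence ρ).trans (h ρ hρ) (h' ρ hρ)⟩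

variable {S : Set (Finpartition (Finset.univ : Finset (Fin n)))}

theorem sameBlock_commonRefinement {p q : Fin n} :
    SameBlock (commonRefinement S) p q ↔ ∀ ρ ∈ S, SameBlock ρ p q :=
  sameBlock_ofEquivalence _ p q

theorem commonRefinement_le {ρ : Finpartition (Finset.univ : Finset (Fin n))} (hρ : ρ ∈ S) :
    commonRefinement S ≤ ρ :=
  le_iff_sameBlock_imp.2 fun _ _ h => sameBlock_commonRefinement.1 h ρ hρ

theorem le_commonRefinement {τ : Finpartition (Finset.univ : Finset (Fin n))}
    (h : ∀ ρ ∈ S, τ ≤ ρ) : τ ≤ commonRefinement S :=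
  le_iff_sameBlock_imp.2 fun _ _ hpq =>
    sameBlock_commonRefinement.2 fun ρ hρ => le_iff_sameBlock_imp.1 (h ρ hρ) _ _ hpq

theorem isNonCrossing_commonRefinement (hS : ∀ ρ ∈ S, IsNonCrossing ρ) :
    IsNonCrossing (commonRefinement S) := by
  rintro ⟨p₁, q₁, p₂, q₂, h₁, h₂, h₃, hp, hq, hpq⟩
  simp only [sameBlock_commonRefinement, not_forall] at hp hq hpq
  obtain ⟨ρ, hρ, hsep⟩ := hpq
  exact hS ρ hρ ⟨p₁, q₁, p₂, q₂, h₁, h₂, h₃, hp ρ hρ, hq ρ hρ, hsep⟩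

end CommonRefinement

/-- `NC(n)`, ordered by reversed refinement, is a lattice: any two non-crossing
partitions `π, σ` have a greatest lower bound and a least upper bound among the
non-crossing partitions; moreover the meet is given blockwise by intersection:
`p ∼_{π∧σ} q ↔ p ∼_π q ∧ p ∼_σ q`. -/
theorem noncrossing_partitions_lattice {n : ℕ}
    (π σ : Finpartition (Finset.univ : Finset (Fin n)))
    (hπ : IsNonCrossing π) (hσ : IsNonCrossing σ) :
    (∃ τ : Finpartition (Finset.univ : Finset (Fin n)), IsNonCrossing τ ∧
        τ ≤ π ∧ τ ≤ σ ∧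
        (∀ ρ : Finpartition (Finset.univ : Finset (Fin n)),
          IsNonCrossing ρ → ρ ≤ π → ρ ≤ σ → ρ ≤ τ) ∧
        (∀ p q : Fin n, SameBlock τ p q ↔ SameBlock π p q ∧ SameBlock σ p q)) ∧
    (∃ τ : Finpartition (Finset.univ : Finset (Fin n)), IsNonCrossing τ ∧
        π ≤ τ ∧ σ ≤ τ ∧
        (∀ ρ : Finpartition (Finset.univ : Finset (Fin n)),
          IsNonCrossing ρ → π ≤ ρ → σ ≤ ρ → τ ≤ ρ)) := by
  refine ⟨⟨commonRefinement {π, σ}, ?_, commonRefinement_le (by simp),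
      commonRefinement_le (by simp), fun ρ _ hρπ hρσ => le_commonRefinement (by simp [hρπ, hρσ]),
      fun p q => by simp [sameBlock_commonRefinement]⟩,
    ⟨commonRefinement {ρ | IsNonCrossing ρ ∧ π ≤ ρ ∧ σ ≤ ρ}, ?_, ?_, ?_,
      fun ρ hρ hπρ hσρ => commonRefinement_le ⟨hρ, hπρ, hσρ⟩⟩⟩
  · exact isNonCrossing_commonRefinement (by simp [hπ, hσ])
  · exact isNonCrossing_commonRefinement fun ρ hρ => hρ.1
  · exact le_commonRefinement fun ρ hρ => hρ.2.1
  · exact le_commonRefinement fun ρ hρ => hρ.2.2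
end

section
/- For every n ∈ ℕ, the Möbius function of the lattice NC(n) of non-crossing partitions satisfies μ(0_n, 1_n) = (−1)^{n−1} C_{n−1}, where C_{n−1} = (1/n)·binom(2(n−1), n−1) is the (n−1)-st Catalan number. -/
/-!
Let `w (k + 1) = (-1)ᵏ C_k` and `ν(τ) = ∏_{X ∈ τ} w |X|`. For every non-crossing `σ` we show
`∑_{τ ∈ NC, τ ≤ σ} ν(τ) = [σ = 0_n]`; `μ(0_n, ·)` obeys the same recursion, so `μ(0_n, σ) = ν(σ)`
and in particular `μ(0_n, 1_n) = w n`.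

The sum over `τ ≤ σ` factors over the blocks of `σ`, so it suffices that `G(s) = ∑_{τ ∈ NC(s)} ν(τ)`
equals `[|s| ≤ 1]`. Split `τ` at the block `B` of `min s`: the other blocks form a non-crossing
partition refining the gaps of `B`, so by induction only those `B` whose gaps have at most one
point each survive. An `m`-set has `[zᵐ] (z + z²)ᵏ` of them with `|B| = k`, hence
`G(s) = [zᵐ] f(z + z²)` for `f = ∑ w_k zᵏ`. The Catalan recursion gives `f² + f = z`, and then
`q = f(z + z²)` satisfies `(q - z)(q + z + 1) = 0` with `q + z + 1` invertible, so `f(z + z²) = z`.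
-/

open scoped BigOperators

open Finset Polynomial

def catalanWeight : ℕ → ℤ
  | 0 => 0
  | k + 1 => (-1) ^ k * catalan k

@[simp] theorem catalanWeight_zero : catalanWeight 0 = 0 := rfl

@[simp] theorem catalanWeight_succ (k : ℕ) : catalanWeight (k + 1) = (-1) ^ k * catalan k := rfl

theorem catalanWeight_eq_choose_div {n : ℕ} (hn : 1 ≤ n) :
    (catalanWeight n : ℂ) = (-1) ^ (n - 1) * ((Nat.choose (2 * (n - 1)) (n - 1) : ℂ) / n) := by
  obtain ⟨m, rfl⟩ : ∃ m, n = m + 1 := ⟨n - 1, by omega⟩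
  rw [Nat.add_sub_cancel, ← Nat.centralBinom_eq_two_mul_choose, ← succ_mul_catalan_eq_centralBinom,
    catalanWeight_succ]
  push_cast
  field_simp

theorem sum_antidiagonal_catalanWeight_mul_add (i : ℕ) :
    ∑ x ∈ antidiagonal i, catalanWeight x.1 * catalanWeight x.2 + catalanWeight i =
      if i = 1 then 1 else 0 := by
  match i with
  | 0 => simp
  | 1 => simp [Nat.sum_antidiagonal_succ]
  | p + 2 =>
    have hsign : ∀ x ∈ antidiagonal p, catalanWeight (x.1 + 1) * catalanWeight (x.2 + 1) =
        (-1) ^ p * (catalan x.1 * catalan x.2 : ℕ) := by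
      intro x hx
      rw [← mem_antidiagonal.mp hx, catalanWeight_succ, catalanWeight_succ, pow_add]
      push_cast
      ring
    rw [Nat.sum_antidiagonal_succ, Nat.sum_antidiagonal_succ', sum_congr rfl hsign,
      ← mul_sum, ← Nat.cast_sum, ← catalan_succ']
    simp [pow_succ]

-- A truncation of the generating function `f` of `catalanWeight`;
-- `sum_antidiagonal_catalanWeight_mul_add` says that `f² + f = X`.
noncomputable def catalanPoly (M : ℕ) : ℤ[X] := ∑ k ∈ range (M + 1), C (catalanWeight k) * X ^ k

theorem coeff_catalanPoly {M i : ℕ} (hi : i ≤ M) :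
    (catalanPoly M).coeff i = catalanWeight i := by
  simp [catalanPoly, finsetSum_coeff, coeff_X_pow, hi]

theorem X_pow_dvd_catalanPoly_sq_add_sub (M : ℕ) :
    X ^ (M + 1) ∣ catalanPoly M ^ 2 + catalanPoly M - X := by
  refine X_pow_dvd_iff.mpr fun i hi => ?_
  have hsq : (catalanPoly M ^ 2).coeff i =
      ∑ x ∈ antidiagonal i, catalanWeight x.1 * catalanWeight x.2 := by
    rw [sq, coeff_mul]
    refine sum_congr rfl fun x hx => ?_
    have := mem_antidiagonal.mp hx
    rw [coeff_catalanPoly (by omega), coeff_catalanPoly (by omega)]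
  rw [coeff_sub, coeff_add, hsq, coeff_catalanPoly (by omega),
    sum_antidiagonal_catalanWeight_mul_add, coeff_X]
  split_ifs <;> omega

theorem sum_catalanWeight_mul_coeff (m : ℕ) :
    ∑ k ∈ range (m + 1), catalanWeight k * ((X + X ^ 2 : ℤ[X]) ^ k).coeff m =
      if m = 1 then 1 else 0 := by
  set q := (catalanPoly m).comp (X + X ^ 2)
  have hq : q.coeff m =
      ∑ k ∈ range (m + 1), catalanWeight k * ((X + X ^ 2 : ℤ[X]) ^ k).coeff m := by
    simp [q, catalanPoly, Polynomial.sum_comp, finsetSum_coeff]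
  -- `(q - X) (q + X + 1) = (f² + f - X) ∘ (X + X²)`, and `q + X + 1` is not divisible by `X`
  have hdvd : X ^ (m + 1) ∣ (q - X) * (q + X + 1) := by
    have hcomp : (q - X) * (q + X + 1) =
        (catalanPoly m ^ 2 + catalanPoly m - X).comp (X + X ^ 2) := by
      simp only [q, sub_comp, add_comp, pow_comp, X_comp]; ring
    obtain ⟨r, hr⟩ := X_pow_dvd_catalanPoly_sq_add_sub m
    rw [hcomp, hr, mul_comp, X_pow_comp]
    exact (pow_dvd_pow_of_dvd (dvd_add (dvd_refl X) (dvd_pow_self X two_ne_zero)) _).mul_right _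
  have hunit : ¬ X ∣ q + X + 1 := by
    have hq0 : q.coeff 0 = 0 := by
      rw [coeff_zero_eq_eval_zero, eval_comp, eval_add, eval_X, eval_pow, eval_X,
        zero_pow two_ne_zero, add_zero, ← coeff_zero_eq_eval_zero,
        coeff_catalanPoly (Nat.zero_le _), catalanWeight_zero]
    simp [X_dvd_iff, hq0]
  have hqX := X_pow_dvd_iff.mp (prime_X.pow_dvd_of_dvd_mul_right _ hunit hdvd) m (by omega)
  rw [coeff_sub, sub_eq_zero, coeff_X] at hqX
  rw [← hq, hqX]
  simp [eq_comm]

theorem coeff_X_add_X_sq_pow_zero (k : ℕ) :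
    ((X + X ^ 2 : ℤ[X]) ^ k).coeff 0 = if k = 0 then 1 else 0 := by
  simp [coeff_zero_eq_eval_zero, zero_pow_eq]

theorem coeff_X_add_X_sq_pow_succ_one (j : ℕ) :
    ((X + X ^ 2 : ℤ[X]) ^ (j + 1)).coeff 1 = ((X + X ^ 2 : ℤ[X]) ^ j).coeff 0 := by
  rw [pow_succ, mul_add, coeff_add, coeff_mul_X, coeff_mul_X_pow', if_neg (by norm_num), add_zero]

theorem coeff_X_add_X_sq_pow_succ_add_two (j n : ℕ) :
    ((X + X ^ 2 : ℤ[X]) ^ (j + 1)).coeff (n + 2) =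
      ((X + X ^ 2 : ℤ[X]) ^ j).coeff (n + 1) + ((X + X ^ 2 : ℤ[X]) ^ j).coeff n := by
  rw [pow_succ, mul_add, coeff_add, coeff_mul_X, coeff_mul_X_pow]

theorem eq_of_forall_finsum_mem_eq {P M : Type*} [PartialOrder P] [Finite P] [AddCommGroup M]
    {p : P → Prop} {a : P} {f g : P → M}
    (h : ∀ σ, p σ → a ≤ σ → ∑ᶠ τ ∈ {τ | p τ ∧ a ≤ τ ∧ τ ≤ σ}, f τ =
      ∑ᶠ τ ∈ {τ | p τ ∧ a ≤ τ ∧ τ ≤ σ}, g τ) :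
    ∀ σ, p σ → a ≤ σ → f σ = g σ := by
  intro σ
  induction σ using WellFoundedLT.induction with
  | _ σ ih =>
  intro hσ haσ
  have hinsert : {τ | p τ ∧ a ≤ τ ∧ τ ≤ σ} = insert σ {τ | p τ ∧ a ≤ τ ∧ τ < σ} := by
    ext τ
    simp only [Set.mem_ofPred_eq, Set.mem_insert_iff, le_iff_lt_or_eq (b := σ)]
    constructor
    · rintro ⟨hτ, haτ, hlt | rfl⟩
      exacts [.inr ⟨hτ, haτ, hlt⟩, .inl rfl]
    · rintro (rfl | ⟨hτ, haτ, hlt⟩)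
      exacts [⟨hσ, haσ, .inr rfl⟩, ⟨hτ, haτ, .inl hlt⟩]
  have hσ' : σ ∉ {τ | p τ ∧ a ≤ τ ∧ τ < σ} := fun h => lt_irrefl σ h.2.2
  have := h σ hσ haσ
  rw [hinsert, finsum_mem_insert _ hσ' (Set.toFinite _), finsum_mem_insert _ hσ' (Set.toFinite _),
    finsum_mem_congr rfl fun τ hτ => ih τ hτ.2.2 hτ.1 hτ.2.1] at this
  exact add_right_cancel this

namespace Finpartition

section Weight

variable {α R : Type*} [DecidableEq α] [CommSemiring R] (f : ℕ → R) {s u v : Finset α}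

def weight (τ : Finpartition s) : R := ∏ X ∈ τ.parts, f #X

theorem parts_top_of_nonempty (hs : s.Nonempty) : (⊤ : Finpartition s).parts = {s} :=
  (Finset.Nonempty.subset_singleton_iff ((⊤ : Finpartition s).parts_nonempty
    hs.ne_empty)).mp (parts_top_subset s)

theorem weight_top (hs : s.Nonempty) : (⊤ : Finpartition s).weight f = f #s := by
  rw [weight, parts_top_of_nonempty hs, prod_singleton]

theorem parts_avoid_of_mem {σ : Finpartition s} {P : Finset α} (hP : P ∈ σ.parts) :
    (σ.avoid P).parts = σ.parts.erase P := by
  ext Q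
  simp only [mem_avoid, mem_erase]
  constructor
  · rintro ⟨Q', hQ', hQ'P, rfl⟩
    have hne : Q' ≠ P := by rintro rfl; exact hQ'P le_rfl
    have hdisj : Disjoint Q' P := σ.disjoint hQ' hP hne
    rw [hdisj.sdiff_eq_left]
    exact ⟨hne, hQ'⟩
  · rintro ⟨hne, hQ⟩
    have hdisj : Disjoint Q P := σ.disjoint hQ hP hne
    exact ⟨Q, hQ, fun hle => σ.ne_bot hQ (hdisj.eq_bot_of_le hle), hdisj.sdiff_eq_left⟩

def disjUnion (P : Finpartition u) (Q : Finpartition v) (huv : Disjoint u v) (hs : u ∪ v = s) :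
    Finpartition s where
  parts := P.parts ∪ Q.parts
  supIndep := by
    rw [supIndep_iff_pairwiseDisjoint, coe_union]
    exact P.disjoint.union Q.disjoint fun X hX Y hY _ => huv.mono (P.le hX) (Q.le hY)
  sup_parts := by rw [sup_union, P.sup_parts, Q.sup_parts, ← hs]; rfl
  bot_notMem := by simp only [mem_union, P.bot_notMem, Q.bot_notMem, or_self, not_false_eq_true]

theorem eq_bot_iff_forall_card_le_one {σ : Finpartition s} : σ = ⊥ ↔ ∀ X ∈ σ.parts, #X ≤ 1 := by
  refine ⟨?_, fun h => le_antisymm (fun X hX => ⟨X, ?_, le_rfl⟩) bot_le⟩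
  · rintro rfl X hX
    obtain ⟨a, -, rfl⟩ := mem_bot_iff.mp hX
    exact (card_singleton a).le
  · obtain ⟨a, ha⟩ := σ.nonempty_of_mem_parts hX
    exact mem_bot_iff.mpr ⟨a, σ.le hX ha,
      (eq_singleton_iff_unique_mem.mpr ⟨ha, fun b hb => card_le_one.mp (h X hX) b hb a ha⟩).symm⟩

theorem disjoint_parts_of_disjoint (P : Finpartition u) (Q : Finpartition v) (huv : Disjoint u v) :
    Disjoint P.parts Q.parts :=
  disjoint_left.mpr fun _ hP hQ => P.ne_bot hP (disjoint_self.mp (huv.mono (P.le hP) (Q.le hQ)))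

theorem not_subset_of_mem_parts_of_disjoint {Q : Finpartition v} (huv : Disjoint u v) {X : Finset α}
    (hX : X ∈ Q.parts) : ¬ X ⊆ u :=
  fun hXu => Q.ne_bot hX (disjoint_self.mp (huv.mono hXu (Q.le hX)))

variable {P : Finpartition u} {Q : Finpartition v} {huv : Disjoint u v} {hs : u ∪ v = s}

@[simp]
theorem parts_disjUnion : (P.disjUnion Q huv hs).parts = P.parts ∪ Q.parts := rfl

theorem weight_disjUnion : (P.disjUnion Q huv hs).weight f = P.weight f * Q.weight f :=
  prod_union (disjoint_parts_of_disjoint P Q huv)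

variable (huv hs) in
theorem filter_parts_disjUnion_left : {X ∈ (P.disjUnion Q huv hs).parts | X ⊆ u} = P.parts := by
  ext X
  simp only [mem_filter, parts_disjUnion, mem_union]
  refine ⟨fun ⟨hX, hXu⟩ => hX.resolve_right fun hQ => ?_, fun hX => ⟨.inl hX, P.le hX⟩⟩
  exact not_subset_of_mem_parts_of_disjoint huv hQ hXu

variable (huv hs) in
theorem filter_parts_disjUnion_right : {X ∈ (P.disjUnion Q huv hs).parts | X ⊆ v} = Q.parts := by
  ext X
  simp only [mem_filter, parts_disjUnion, mem_union]
  refine ⟨fun ⟨hX, hXv⟩ => hX.resolve_left fun hP => ?_, fun hX => ⟨.inr hX, Q.le hX⟩⟩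
  exact not_subset_of_mem_parts_of_disjoint huv.symm hP hXv

theorem disjUnion_inj {P' : Finpartition u} {Q' : Finpartition v}
    (h : P.disjUnion Q huv hs = P'.disjUnion Q' huv hs) : P = P' ∧ Q = Q' :=
  ⟨Finpartition.ext (by
      rw [← filter_parts_disjUnion_left huv hs, h, filter_parts_disjUnion_left]),
    Finpartition.ext (by
      rw [← filter_parts_disjUnion_right huv hs, h, filter_parts_disjUnion_right])⟩

theorem parts_restrict_of_forall (τ : Finpartition s) (hu : u ⊆ s)
    (h : ∀ X ∈ τ.parts, X ⊆ u ∨ Disjoint X u) :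
    (τ.restrict hu).parts = {X ∈ τ.parts | X ⊆ u} := by
  ext X
  simp only [restrict, mem_erase, mem_image, mem_filter]
  constructor
  · rintro ⟨hne, Y, hY, rfl⟩
    rcases h Y hY with hYu | hYu
    · rw [inf_eq_left.mpr hYu]
      exact ⟨hY, hYu⟩
    · exact absurd hYu.eq_bot hne
  · rintro ⟨hX, hXu⟩
    exact ⟨τ.ne_bot hX, X, hX, inf_eq_left.mpr hXu⟩

variable (huv hs) in
theorem disjUnion_restrict (τ : Finpartition s) (h : ∀ X ∈ τ.parts, X ⊆ u ∨ X ⊆ v) :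
    (τ.restrict (subset_union_left.trans hs.subset)).disjUnion
      (τ.restrict (subset_union_right.trans hs.subset)) huv hs = τ := by
  ext X
  rw [parts_disjUnion, parts_restrict_of_forall, parts_restrict_of_forall, ← filter_or,
    mem_filter, and_iff_left_of_imp (h X)]
  · exact fun Y hY => (h Y hY).symm.imp_right huv.mono_left
  · exact fun Y hY => (h Y hY).imp_right huv.symm.mono_left

-- Under these hypotheses `τ ↦ (τ ∩ u, τ ∩ v)` is a bijection from `{τ | p τ}` onto
-- `{P | p₁ P} × {Q | p₂ Q}`, and weights are multiplicative.
theorem sum_weight_eq_mul_of_split {p : Finpartition s → Prop} {p₁ : Finpartition u → Prop}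
    {p₂ : Finpartition v → Prop} [DecidablePred p] [DecidablePred p₁] [DecidablePred p₂]
    (hsplit : ∀ τ, p τ → ∀ X ∈ τ.parts, X ⊆ u ∨ X ⊆ v)
    (hres : ∀ τ, p τ → ∀ (P : Finpartition u) (Q : Finpartition v),
      P.parts = {X ∈ τ.parts | X ⊆ u} → Q.parts = {X ∈ τ.parts | X ⊆ v} → p₁ P ∧ p₂ Q)
    (hjoin : ∀ P Q, p₁ P → p₂ Q → p (P.disjUnion Q huv hs)) :
    ∑ τ with p τ, τ.weight f = (∑ P with p₁ P, P.weight f) * ∑ Q with p₂ Q, Q.weight f := by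
  classical
  have himage : univ.filter p =
      (univ.filter p₁ ×ˢ univ.filter p₂).image fun PQ => PQ.1.disjUnion PQ.2 huv hs := by
    ext τ
    simp only [mem_filter, mem_univ, true_and, mem_image, mem_product, Prod.exists]
    constructor
    · intro hτ
      refine ⟨_, _, hres τ hτ _ _ (parts_restrict_of_forall τ _ fun X hX => ?_)
        (parts_restrict_of_forall τ _ fun X hX => ?_), disjUnion_restrict huv hs τ (hsplit τ hτ)⟩
      · exact (hsplit τ hτ X hX).imp_right huv.symm.mono_left
      · exact (hsplit τ hτ X hX).symm.imp_right huv.mono_left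
    · rintro ⟨P, Q, ⟨hP, hQ⟩, rfl⟩
      exact hjoin P Q hP hQ
  rw [himage, sum_image fun _ _ _ _ h => Prod.ext_iff.mpr (disjUnion_inj h), sum_product,
    sum_mul_sum]
  simp only [weight_disjUnion]

end Weight

end Finpartition

namespace Finset

variable {α : Type*} [LinearOrder α]

def Crosses (X Y : Finset α) : Prop :=
  ∃ a ∈ X, ∃ b ∈ Y, ∃ c ∈ X, ∃ d ∈ Y, a < b ∧ b < c ∧ c < d

theorem Crosses.mono {X X' Y Y' : Finset α} (hX : X ⊆ X') (hY : Y ⊆ Y') (h : X.Crosses Y) :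
    X'.Crosses Y' := by
  obtain ⟨a, ha, b, hb, c, hc, d, hd, hab, hbc, hcd⟩ := h
  exact ⟨a, hX ha, b, hY hb, c, hX hc, d, hY hd, hab, hbc, hcd⟩

theorem not_crosses_singleton (x : α) (Y : Finset α) : ¬ ({x} : Finset α).Crosses Y := by
  rintro ⟨a, ha, b, -, c, hc, -, -, hab, hbc, -⟩
  rw [mem_singleton] at ha hc
  subst ha hc
  exact lt_asymm hab hbc

variable {B : Finset α} {x y b : α}

-- The index of the gap of `B` in which `y` lies.
def gapIndex (B : Finset α) (y : α) : ℕ := #{c ∈ B | c < y}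

theorem gapIndex_mono (B : Finset α) (hxy : x ≤ y) : B.gapIndex x ≤ B.gapIndex y :=
  card_le_card (monotone_filter_right B fun _ _ hc => hc.trans_le hxy)

theorem gapIndex_lt_gapIndex (hb : b ∈ B) (hxb : x ≤ b) (hby : b < y) :
    B.gapIndex x < B.gapIndex y := by
  refine card_lt_card ⟨monotone_filter_right B fun _ _ hc => hc.trans (hxb.trans_lt hby), ?_⟩
  intro h
  exact (h (mem_filter.mpr ⟨hb, hby⟩) |> mem_filter.mp).2.not_ge hxb

theorem exists_mem_of_gapIndex_lt (h : B.gapIndex x < B.gapIndex y) :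
    ∃ b ∈ B, x ≤ b ∧ b < y := by
  by_contra! hno
  refine h.not_ge (card_le_card fun c hc => ?_)
  rw [mem_filter] at hc ⊢
  exact ⟨hc.1, not_le.mp fun hxc => (hno c hc.1 hxc).not_gt hc.2⟩

theorem gapIndex_eq_zero (h : ∀ c ∈ B, y ≤ c) : B.gapIndex y = 0 :=
  card_eq_zero.mpr (filter_eq_empty_iff.mpr fun c hc => not_lt.mpr (h c hc))

section Spread

variable [DecidableEq α] {s u v : Finset α} {a : α}

theorem gapIndex_insert_of_lt (ha : a ∉ B) (hay : a < y) :
    (insert a B).gapIndex y = B.gapIndex y + 1 := by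
  rw [gapIndex, filter_insert, if_pos hay, card_insert_of_notMem (fun h => ha (mem_filter.mp h).1)]
  rfl

/-- Each gap of `B` in `s` has at most one point, and no point of `s` lies below `B`. -/
def IsSpreadIn (B s : Finset α) : Prop :=
  Set.InjOn B.gapIndex ↑(s \ B) ∧ ∀ y ∈ s \ B, B.gapIndex y ≠ 0

instance (B s : Finset α) : Decidable (B.IsSpreadIn s) :=
  inferInstanceAs (Decidable (_ ∧ _))

theorem exists_eq_insert_forall_lt (hs : s.Nonempty) : ∃ a u, (∀ x ∈ u, a < x) ∧ s = insert a u :=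
  ⟨s.min' hs, s.erase (s.min' hs), fun _ hx => min'_lt_of_mem_erase_min' s hs hx,
    (insert_erase (min'_mem s hs)).symm⟩

theorem IsSpreadIn.mem_of_forall_le (h : B.IsSpreadIn s) (hB : B ⊆ s) (ha : a ∈ s)
    (hle : ∀ x ∈ s, a ≤ x) : a ∈ B := by
  by_contra haB
  exact h.2 a (mem_sdiff.mpr ⟨ha, haB⟩) (gapIndex_eq_zero fun c hc => hle c (hB hc))

theorem isSpreadIn_iff_min'_mem (hB : B ⊆ s) (hs : s.Nonempty) :
    B.IsSpreadIn s ↔ s.min' hs ∈ B ∧ Set.InjOn B.gapIndex ↑(s \ B) := by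
  refine ⟨fun h => ⟨h.mem_of_forall_le hB (min'_mem s hs) (min'_le s), h.1⟩,
    fun ⟨hm, hinj⟩ => ⟨hinj, fun y hy => ?_⟩⟩
  obtain ⟨hys, hyB⟩ := mem_sdiff.mp hy
  have hlt : s.min' hs < y := (min'_le s y hys).lt_of_ne fun h => hyB (h ▸ hm)
  exact (gapIndex_lt_gapIndex hm le_rfl hlt).ne_bot

theorem injOn_gapIndex_insert_insert_iff (ha : ∀ x ∈ u, a < x) (hB : B ⊆ u) :
    Set.InjOn (insert a B).gapIndex ↑(insert a u \ insert a B) ↔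
      Set.InjOn B.gapIndex ↑(u \ B) := by
  have hau : a ∉ u := fun h => (ha a h).false
  have hidx : ∀ y ∈ u \ B, (insert a B).gapIndex y = B.gapIndex y + 1 := fun y hy =>
    gapIndex_insert_of_lt (fun h => hau (hB h)) (ha y (mem_sdiff.mp hy).1)
  rw [insert_sdiff_insert, sdiff_insert_of_notMem hau]
  refine ⟨fun h x hx y hy hxy => h hx hy ?_, fun h x hx y hy hxy => h hx hy ?_⟩
  · rw [hidx x hx, hidx y hy, hxy]
  · rwa [hidx x hx, hidx y hy, add_left_inj] at hxy

theorem injOn_gapIndex_insert_sdiff_iff (hb : ∀ x ∈ v, b < x) (hB : B ⊆ v) :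
    Set.InjOn B.gapIndex ↑(insert b v \ B) ↔ B.IsSpreadIn v := by
  have hbv : b ∉ v \ B := fun h => (hb b (mem_sdiff.mp h).1).false
  rw [insert_sdiff_of_notMem _ fun h => (hb b (hB h)).false, coe_insert, Set.injOn_insert hbv,
    IsSpreadIn, gapIndex_eq_zero fun c hc => (hb c (hB hc)).le]
  simp only [Set.mem_image, mem_coe, not_exists, not_and]

def spreadCount (s : Finset α) (k : ℕ) : ℕ := #{B ∈ s.powerset | B.IsSpreadIn s ∧ #B = k}

theorem spreadCount_insert (ha : ∀ x ∈ u, a < x) (k : ℕ) :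
    spreadCount (insert a u) k =
      #{B ∈ u.powerset | Set.InjOn B.gapIndex ↑(u \ B) ∧ #B + 1 = k} := by
  have hau : a ∉ u := fun h => (ha a h).false
  rw [spreadCount, card_filter, card_filter, sum_powerset_insert hau]
  have hnot : ∀ B ∈ u.powerset, ¬ B.IsSpreadIn (insert a u) := fun B hB h =>
    hau (mem_powerset.mp hB (h.mem_of_forall_le ((mem_powerset.mp hB).trans (subset_insert a u))
      (mem_insert_self a u) fun x hx => (mem_insert.mp hx).elim ge_of_eq fun hx => (ha x hx).le))
  rw [sum_eq_zero fun B hB => if_neg fun h => hnot B hB h.1, zero_add]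
  refine sum_congr rfl fun B hB => if_congr ?_ rfl rfl
  have hB := mem_powerset.mp hB
  have hnz : ∀ y ∈ insert a u \ insert a B, (insert a B).gapIndex y ≠ 0 := by
    intro y hy
    rw [insert_sdiff_insert, sdiff_insert_of_notMem hau] at hy
    rw [gapIndex_insert_of_lt (fun h => hau (hB h)) (ha y (mem_sdiff.mp hy).1)]
    exact Nat.succ_ne_zero _
  rw [card_insert_of_notMem fun h => hau (hB h), IsSpreadIn, and_iff_left hnz,
    injOn_gapIndex_insert_insert_iff ha hB]

theorem spreadCount_insert_insert_succ (hab : a < b) (hb : ∀ x ∈ v, b < x) (j : ℕ) :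
    spreadCount (insert a (insert b v)) (j + 1) = spreadCount v j + spreadCount (insert b v) j := by
  have ha : ∀ x ∈ insert b v, a < x := fun x hx =>
    (mem_insert.mp hx).elim (fun h => h ▸ hab) fun hx => hab.trans (hb x hx)
  have hbv : b ∉ v := fun h => (hb b h).false
  rw [spreadCount_insert ha, spreadCount_insert hb, spreadCount, card_filter, card_filter,
    card_filter, sum_powerset_insert hbv]
  congr 1
  · refine sum_congr rfl fun B hB => if_congr ?_ rfl rfl
    rw [add_left_inj, injOn_gapIndex_insert_sdiff_iff hb (mem_powerset.mp hB)]
  · refine sum_congr rfl fun B hB => if_congr ?_ rfl rfl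
    have hB := mem_powerset.mp hB
    rw [card_insert_of_notMem fun h => hbv (hB h), add_left_inj,
      injOn_gapIndex_insert_insert_iff hb hB]

theorem spreadCount_empty (k : ℕ) : spreadCount (∅ : Finset α) k = if k = 0 then 1 else 0 := by
  rcases eq_or_ne k 0 with rfl | hk
  · simp [spreadCount, IsSpreadIn, filter_singleton]
  · simp [spreadCount, filter_singleton, hk, hk.symm]

theorem spreadCount_eq_coeff (s : Finset α) (k : ℕ) :
    (spreadCount s k : ℤ) = ((X + X ^ 2 : ℤ[X]) ^ k).coeff #s := by
  induction s using Finset.strongInduction generalizing k with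
  | H s ih =>
  rcases s.eq_empty_or_nonempty with rfl | hs
  · rw [spreadCount_empty, card_empty, coeff_X_add_X_sq_pow_zero]
    push_cast
    rfl
  obtain ⟨a, u, ha, rfl⟩ := exists_eq_insert_forall_lt hs
  have hau : a ∉ u := fun h => (ha a h).false
  rw [card_insert_of_notMem hau]
  rcases k with _ | j
  · simp [spreadCount_insert ha, coeff_one]
  rcases u.eq_empty_or_nonempty with rfl | hu
  · rw [card_empty, coeff_X_add_X_sq_pow_succ_one, coeff_X_add_X_sq_pow_zero, spreadCount_insert ha]
    rcases eq_or_ne j 0 with rfl | hj <;> simp [filter_singleton, Ne.symm, *]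
  obtain ⟨b, v, hb, rfl⟩ := exists_eq_insert_forall_lt hu
  have hbv : b ∉ v := fun h => (hb b h).false
  rw [spreadCount_insert_insert_succ (ha b (mem_insert_self b v)) hb, Nat.cast_add,
    ih v ((ssubset_insert hbv).trans (ssubset_insert hau)), ih _ (ssubset_insert hau),
    card_insert_of_notMem hbv, coeff_X_add_X_sq_pow_succ_add_two, add_comm]

theorem sum_filter_isSpreadIn {R : Type*} [CommSemiring R] (s : Finset α) (g : ℕ → R) :
    ∑ B ∈ s.powerset with B.IsSpreadIn s, g #B = ∑ k ∈ range (#s + 1), g k * spreadCount s k := by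
  rw [← sum_fiberwise_of_maps_to (g := card) (t := range (#s + 1)) fun B hB =>
    mem_range.mpr (Nat.lt_succ_of_le (card_le_card (mem_powerset.mp (mem_filter.mp hB).1)))]
  refine sum_congr rfl fun k _ => ?_
  rw [sum_congr rfl fun B hB => congrArg g (mem_filter.mp hB).2, sum_const, nsmul_eq_mul, mul_comm,
    filter_filter, spreadCount]

end Spread

end Finset

namespace Finpartition

variable {α : Type*} [LinearOrder α] [DecidableEq α] {s t u v : Finset α}

def NonCrossing (π : Finpartition s) : Prop :=
  (π.parts : Set (Finset α)).Pairwise fun X Y => ¬ X.Crosses Y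

theorem NonCrossing.of_parts_subset {π : Finpartition s} {π' : Finpartition t}
    (hπ : π.NonCrossing) (h : π'.parts ⊆ π.parts) : π'.NonCrossing :=
  hπ.mono (coe_subset.mpr h)

theorem nonCrossing_top : (⊤ : Finpartition s).NonCrossing :=
  (parts_top_subsingleton s).pairwise _

theorem nonCrossing_bot : (⊥ : Finpartition s).NonCrossing := by
  intro X hX Y _ _
  obtain ⟨x, -, rfl⟩ := mem_bot_iff.mp hX
  exact not_crosses_singleton x Y

theorem NonCrossing.disjUnion {P : Finpartition u} {Q : Finpartition v} {huv : Disjoint u v}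
    {hs : u ∪ v = s} (hP : P.NonCrossing) (hQ : Q.NonCrossing)
    (h : ∀ X ∈ P.parts, ∀ Y ∈ Q.parts, ¬ X.Crosses Y ∧ ¬ Y.Crosses X) :
    (P.disjUnion Q huv hs).NonCrossing := by
  rw [NonCrossing, parts_disjUnion, coe_union, Set.pairwise_union]
  exact ⟨hP, hQ, fun X hX Y hY _ => h X hX Y hY⟩

open Classical in
noncomputable def gapPartition (s B : Finset α) : Finpartition (s \ B) :=
  ofSetSetoid (Setoid.ker B.gapIndex) (s \ B)

theorem mem_of_mem_gapPartition_iff {X : Finset α} (hX : X ∈ (gapPartition s B).parts) {x y : α}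
    (hx : x ∈ X) : y ∈ X ↔ y ∈ s \ B ∧ B.gapIndex x = B.gapIndex y := by
  classical
  rw [← part_eq_of_mem _ hX hx, gapPartition, mem_part_ofSetSetoid_iff_rel, Setoid.ker_def,
    and_iff_right ((gapPartition s B).le hX hx)]

theorem nonCrossing_gapPartition (s B : Finset α) : (gapPartition s B).NonCrossing := by
  rintro X hX Y hY hXY ⟨a, ha, b, hb, c, hc, -, -, hab, hbc, -⟩
  have hac := ((mem_of_mem_gapPartition_iff hX ha).mp hc).2
  have hbY : b ∈ s \ B := (gapPartition s B).le hY hb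
  have hab' : B.gapIndex a = B.gapIndex b :=
    le_antisymm (B.gapIndex_mono hab.le) (hac ▸ B.gapIndex_mono hbc.le)
  exact hXY ((gapPartition s B).eq_of_mem_parts hX hY ((mem_of_mem_gapPartition_iff hX ha).mpr
    ⟨hbY, hab'⟩) hb)

theorem le_gapPartition_iff {τ : Finpartition (s \ B)} :
    τ ≤ gapPartition s B ↔ ∀ X ∈ τ.parts, ∀ x ∈ X, ∀ y ∈ X, ∀ b ∈ B, ¬ (x < b ∧ b < y) := by
  constructor
  · rintro hle X hX x hx y hy b hb ⟨hxb, hby⟩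
    obtain ⟨G, hG, hXG⟩ := hle hX
    have hxy := ((mem_of_mem_gapPartition_iff hG (hXG hx)).mp (hXG hy)).2
    exact (gapIndex_lt_gapIndex hb hxb.le hby).ne hxy
  · intro h X hX
    obtain ⟨x, hx⟩ := τ.nonempty_of_mem_parts hX
    have hxs : x ∈ s \ B := τ.le hX hx
    refine ⟨_, (gapPartition s B).part_mem.mpr hxs, fun y hy => ?_⟩
    have hyX : y ∈ s \ B := τ.le hX hy
    have hsame : ∀ x ∈ X, ∀ y ∈ X, x ≤ y → B.gapIndex x = B.gapIndex y := by
      intro x hx y hy hxy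
      refine (B.gapIndex_mono hxy).antisymm (not_lt.mp fun hlt => ?_)
      obtain ⟨b, hb, hxb, hby⟩ := exists_mem_of_gapIndex_lt hlt
      have hxb' : x < b := hxb.lt_of_ne fun h => (mem_sdiff.mp (τ.le hX hx)).2 (h ▸ hb)
      exact h X hX x hx y hy b hb ⟨hxb', hby⟩
    rw [mem_of_mem_gapPartition_iff ((gapPartition s B).part_mem.mpr hxs)
      ((gapPartition s B).mem_part_self.mpr hxs)]
    exact ⟨hyX, (le_total x y).elim (hsame x hx y hy) fun h => (hsame y hy x hx h).symm⟩

theorem forall_card_le_one_gapPartition_iff :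
    (∀ X ∈ (gapPartition s B).parts, #X ≤ 1) ↔ Set.InjOn B.gapIndex ↑(s \ B) := by
  constructor
  · intro h x hx y hy hxy
    have hxs : x ∈ s \ B := hx
    have hG := (gapPartition s B).part_mem.mpr hxs
    have hxG := (gapPartition s B).mem_part_self.mpr hxs
    exact card_le_one.mp (h _ hG) x hxG y ((mem_of_mem_gapPartition_iff hG hxG).mpr ⟨hy, hxy⟩)
  · intro h X hX
    refine card_le_one.mpr fun x hx y hy => h ((gapPartition s B).le hX hx)
      ((gapPartition s B).le hX hy) ?_
    exact ((mem_of_mem_gapPartition_iff hX hx).mp hy).2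

section Sums

variable {R : Type*} [CommSemiring R] (f : ℕ → R)

open Classical

noncomputable def ncSum (σ : Finpartition s) : R := ∑ τ with τ.NonCrossing ∧ τ ≤ σ, τ.weight f

noncomputable def ncTotal (s : Finset α) : R := ∑ τ : Finpartition s with τ.NonCrossing, τ.weight f

theorem ncSum_eq_ncTotal_mul_ncSum_avoid {σ : Finpartition s} (hσ : σ.NonCrossing) {P : Finset α}
    (hP : P ∈ σ.parts) : ncSum f σ = ncTotal f P * ncSum f (σ.avoid P) := by
  have hdisj : ∀ Q ∈ σ.parts.erase P, Disjoint Q P := fun Q hQ =>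
    σ.disjoint (mem_of_mem_erase hQ) hP (ne_of_mem_erase hQ)
  rw [ncSum, ncTotal, ncSum]
  refine sum_weight_eq_mul_of_split f (huv := disjoint_sdiff)
    (hs := union_sdiff_of_subset (σ.le hP)) ?_ ?_ ?_
  · rintro τ ⟨-, hle⟩ X hX
    obtain ⟨Q, hQ, hXQ⟩ := hle hX
    by_cases hQP : Q = P
    · exact .inl (hQP ▸ hXQ)
    · exact .inr (subset_sdiff.mpr ⟨hXQ.trans (σ.le hQ),
        (hdisj Q (mem_erase.mpr ⟨hQP, hQ⟩)).mono_left hXQ⟩)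
  · rintro τ ⟨hτ, hle⟩ P' Q' hP' hQ'
    refine ⟨hτ.of_parts_subset (hP' ▸ filter_subset _ _),
      hτ.of_parts_subset (hQ' ▸ filter_subset _ _), fun X hX => ?_⟩
    rw [hQ', mem_filter] at hX
    obtain ⟨Q, hQ, hXQ⟩ := hle hX.1
    refine ⟨Q, ?_, hXQ⟩
    rw [parts_avoid_of_mem hP, mem_erase]
    refine ⟨fun hQP => ?_, hQ⟩
    obtain ⟨x, hx⟩ := τ.nonempty_of_mem_parts hX.1
    exact (mem_sdiff.mp (hX.2 hx)).2 (hQP ▸ hXQ hx)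
  · rintro P' Q' hP' ⟨hQ', hQ'le⟩
    have hle : ∀ Y ∈ Q'.parts, ∃ Z ∈ σ.parts.erase P, Y ⊆ Z := fun Y hY =>
      parts_avoid_of_mem hP ▸ hQ'le hY
    refine ⟨hP'.disjUnion hQ' fun X hX Y hY => ?_, fun X hX => ?_⟩
    · obtain ⟨Q, hQ, hYQ⟩ := hle Y hY
      have hPQ : P ≠ Q := (ne_of_mem_erase hQ).symm
      exact ⟨fun h => hσ hP (mem_of_mem_erase hQ) hPQ (h.mono (P'.le hX) hYQ),
        fun h => hσ (mem_of_mem_erase hQ) hP hPQ.symm (h.mono hYQ (P'.le hX))⟩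
    · rcases mem_union.mp hX with hX | hX
      · exact ⟨P, hP, P'.le hX⟩
      · obtain ⟨Q, hQ, hXQ⟩ := hle X hX
        exact ⟨Q, mem_of_mem_erase hQ, hXQ⟩

theorem ncSum_eq_prod_ncTotal {σ : Finpartition s} (hσ : σ.NonCrossing) :
    ncSum f σ = ∏ P ∈ σ.parts, ncTotal f P := by
  induction hn : #σ.parts generalizing s with
  | zero =>
    rw [card_eq_zero] at hn
    have hunique : ∀ τ : Finpartition s, τ = σ := fun τ =>
      Finpartition.ext (by rw [hn, parts_eq_empty_iff.mpr (parts_eq_empty_iff.mp hn)])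
    rw [ncSum, sum_eq_single_of_mem σ (by simp [hσ]) fun τ _ hτ => absurd (hunique τ) hτ,
      weight, hn, prod_empty, prod_empty]
  | succ n ih =>
    obtain ⟨P, hP⟩ := card_pos.mp (show 0 < #σ.parts by omega)
    have hσP : (σ.avoid P).NonCrossing :=
      hσ.of_parts_subset (parts_avoid_of_mem hP ▸ erase_subset _ _)
    rw [ncSum_eq_ncTotal_mul_ncSum_avoid f hσ hP, ih hσP (by simp [parts_avoid_of_mem hP, hP, hn]),
      parts_avoid_of_mem hP, mul_prod_erase _ _ hP]

theorem ncTotal_eq_ncSum_top (s : Finset α) : ncTotal f s = ncSum f (⊤ : Finpartition s) := by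
  simp only [ncTotal, ncSum, le_top, and_true]

-- A non-crossing partition is its block `B` containing `min s` together with a non-crossing
-- partition refining the gaps of `B`.
theorem ncTotal_eq_sum_ncSum_gapPartition (hs : s.Nonempty) :
    ncTotal f s = ∑ B ∈ s.powerset with s.min' hs ∈ B, f #B * ncSum f (gapPartition s B) := by
  set m := s.min' hs
  have hm : m ∈ s := min'_mem s hs
  rw [ncTotal, ← sum_fiberwise_of_maps_to (g := fun τ => τ.part m)
    (t := {B ∈ s.powerset | m ∈ B}) fun τ _ => by
      simpa [part_subset] using τ.mem_part_self.mpr hm]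
  refine sum_congr rfl fun B hB => ?_
  obtain ⟨hBs, hmB⟩ := by simpa using hB
  have hBne : B.Nonempty := ⟨m, hmB⟩
  have htop : ∑ P : Finpartition B with P = ⊤, P.weight f = f #B := by
    simp [filter_eq', weight_top f hBne]
  rw [filter_filter, ncSum, ← htop]
  refine sum_weight_eq_mul_of_split f (huv := disjoint_sdiff) (hs := union_sdiff_of_subset hBs)
    ?_ ?_ ?_
  · rintro τ ⟨-, hτm⟩ X hX
    have hB : B ∈ τ.parts := hτm ▸ τ.part_mem.mpr hm
    by_cases hXB : X = B
    · exact .inl hXB.le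
    · exact .inr (subset_sdiff.mpr ⟨τ.le hX, τ.disjoint hX hB hXB⟩)
  · rintro τ ⟨hτ, hτm⟩ P Q hP hQ
    have hB : B ∈ τ.parts := hτm ▸ τ.part_mem.mpr hm
    refine ⟨Finpartition.ext ?_, hτ.of_parts_subset (hQ ▸ filter_subset _ _), ?_⟩
    · rw [hP, parts_top_of_nonempty hBne]
      ext X
      simp only [mem_filter, mem_singleton]
      refine ⟨fun ⟨hX, hXB⟩ => ?_, fun hXB => ⟨hXB ▸ hB, hXB.le⟩⟩
      obtain ⟨x, hx⟩ := τ.nonempty_of_mem_parts hX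
      exact τ.eq_of_mem_parts hX hB hx (hXB hx)
    · refine le_gapPartition_iff.mpr fun X hX x hx y hy b hb ⟨hxb, hby⟩ => ?_
      rw [hQ, mem_filter] at hX
      have hxB : x ∉ B := (mem_sdiff.mp (hX.2 hx)).2
      have hmx : m < x := (min'_le s x (τ.le hX.1 hx)).lt_of_ne fun h => hxB (h ▸ hmB)
      exact hτ hB hX.1 (fun h => hxB (h ▸ hx)) ⟨m, hmB, x, hx, b, hb, y, hy, hmx, hxb, hby⟩
  · rintro P Q rfl ⟨hQ, hQle⟩
    have hgap := le_gapPartition_iff.mp hQle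
    refine ⟨nonCrossing_top.disjUnion hQ fun X hX Y hY => ?_, ?_⟩
    · rw [parts_top_of_nonempty hBne, mem_singleton] at hX
      subst hX
      exact ⟨fun ⟨_, _, b, hb, c, hc, d, hd, _, hbc, hcd⟩ => hgap Y hY b hb d hd c hc ⟨hbc, hcd⟩,
        fun ⟨a, ha, b, hb, c, hc, _, _, hab, hbc, _⟩ => hgap Y hY a ha c hc b hb ⟨hab, hbc⟩⟩
    · exact part_eq_of_mem _ (mem_union_left _ (by simp [parts_top_of_nonempty hBne])) hmB

end Sums

theorem ncTotal_catalanWeight {R : Type*} [CommRing R] (s : Finset α) :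
    ncTotal (fun k => (catalanWeight k : R)) s = if #s ≤ 1 then 1 else 0 := by
  induction s using Finset.strongInduction with
  | H s ih =>
  rcases s.eq_empty_or_nonempty with rfl | hs
  · rw [ncTotal_eq_ncSum_top, ncSum_eq_prod_ncTotal _ nonCrossing_top, parts_eq_empty_iff.mpr rfl,
      prod_empty, if_pos (by simp)]
  have hgap : ∀ B ⊆ s, s.min' hs ∈ B → ncSum (fun k => (catalanWeight k : R))
      (gapPartition s B) = if Set.InjOn B.gapIndex ↑(s \ B) then 1 else 0 := by
    intro B hBs hmB
    have hlt : s \ B ⊂ s := sdiff_ssubset hBs ⟨_, hmB⟩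
    rw [ncSum_eq_prod_ncTotal _ (nonCrossing_gapPartition s B),
      prod_congr rfl fun X hX => ih X (((gapPartition s B).le hX).trans_ssubset hlt), prod_boole]
    exact if_congr forall_card_le_one_gapPartition_iff rfl rfl
  have hspread : ∑ B ∈ s.powerset with s.min' hs ∈ B,
      (catalanWeight #B : R) * ncSum (fun k => (catalanWeight k : R)) (gapPartition s B) =
      ∑ B ∈ s.powerset with B.IsSpreadIn s, (catalanWeight #B : R) := by
    rw [sum_filter, sum_filter]
    refine sum_congr rfl fun B hB => ?_
    have hBs := mem_powerset.mp hB
    by_cases hm : s.min' hs ∈ B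
    · rw [if_pos hm, hgap B hBs hm, mul_boole]
      exact if_congr (by rw [isSpreadIn_iff_min'_mem hBs hs, and_iff_right hm]) rfl rfl
    · rw [if_neg hm, if_neg fun h => hm ((isSpreadIn_iff_min'_mem hBs hs).mp h).1]
  rw [ncTotal_eq_sum_ncSum_gapPartition _ hs, hspread,
    sum_filter_isSpreadIn s fun k => (catalanWeight k : R)]
  have key := congrArg (Int.cast : ℤ → R) (sum_catalanWeight_mul_coeff #s)
  simp only [← spreadCount_eq_coeff, Int.cast_sum, Int.cast_mul, Int.cast_natCast] at key
  rw [key]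
  obtain h | h : #s = 1 ∨ 2 ≤ #s := by have := hs.card_pos; omega
  · simp [h]
  · simp [show #s ≠ 1 by omega, show ¬ #s ≤ 1 by omega]

theorem ncSum_catalanWeight {R : Type*} [CommRing R] {σ : Finpartition s} (hσ : σ.NonCrossing) :
    ncSum (fun k => (catalanWeight k : R)) σ = if σ = ⊥ then 1 else 0 := by
  rw [ncSum_eq_prod_ncTotal _ hσ, prod_congr rfl fun P _ => ncTotal_catalanWeight P, prod_boole]
  exact if_congr eq_bot_iff_forall_card_le_one.symm rfl rfl

end Finpartition

theorem isNonCrossing_iff_nonCrossing {n : ℕ} (π : Finpartition (Finset.univ : Finset (Fin n))) :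
    IsNonCrossing π ↔ π.NonCrossing := by
  refine not_iff_comm.mp ⟨fun h => ?_, fun h => ?_⟩
  · obtain ⟨X, hX, Y, hY, hXY, a, ha, b, hb, c, hc, d, hd, hab, hbc, hcd⟩ :
        ∃ X ∈ π.parts, ∃ Y ∈ π.parts, X ≠ Y ∧ X.Crosses Y := by
      simpa [Finpartition.NonCrossing, Set.Pairwise] using h
    refine ⟨a, b, c, d, hab, hbc, hcd, ⟨X, hX, ha, hc⟩, ⟨Y, hY, hb, hd⟩, ?_⟩
    rintro ⟨Z, hZ, haZ, hbZ⟩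
    exact hXY ((π.eq_of_mem_parts hX hZ ha haZ).trans (π.eq_of_mem_parts hZ hY hbZ hb))
  · obtain ⟨a, b, c, d, hab, hbc, hcd, ⟨X, hX, ha, hc⟩, ⟨Y, hY, hb, hd⟩, hab'⟩ := h
    exact fun hnc => hnc hX hY (fun hXY => hab' ⟨X, hX, ha, hXY ▸ hb⟩)
      ⟨a, ha, b, hb, c, hc, d, hd, hab, hbc, hcd⟩

theorem IsMoebiusNC.finsum_mem_eq {n : ℕ}
    {μ : Finpartition (Finset.univ : Finset (Fin n)) →
      Finpartition (Finset.univ : Finset (Fin n)) → ℂ}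
    (hμ : IsMoebiusNC n μ) {σ : Finpartition (Finset.univ : Finset (Fin n))}
    (hσ : IsNonCrossing σ) :
    ∑ᶠ τ ∈ {τ | IsNonCrossing τ ∧ ⊥ ≤ τ ∧ τ ≤ σ}, μ ⊥ τ = if σ = ⊥ then 1 else 0 := by
  split_ifs with h
  · subst h
    have hsingle : {τ : Finpartition (Finset.univ : Finset (Fin n)) |
        IsNonCrossing τ ∧ ⊥ ≤ τ ∧ τ ≤ ⊥} = {⊥} := by
      ext τ
      simp only [Set.mem_ofPred_eq, Set.mem_singleton_iff, le_bot_iff, bot_le, true_and]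
      exact ⟨And.right, fun h => ⟨h ▸ hσ, h⟩⟩
    rw [hsingle, finsum_mem_singleton, hμ.1 ⊥ hσ]
  · exact hμ.2 ⊥ σ ((isNonCrossing_iff_nonCrossing ⊥).mpr Finpartition.nonCrossing_bot) hσ bot_le
      (Ne.symm h)

theorem finsum_mem_weight_catalanWeight {n : ℕ} {σ : Finpartition (Finset.univ : Finset (Fin n))}
    (hσ : IsNonCrossing σ) :
    ∑ᶠ τ ∈ {τ | IsNonCrossing τ ∧ ⊥ ≤ τ ∧ τ ≤ σ}, τ.weight (fun k => (catalanWeight k : ℂ)) =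
      if σ = ⊥ then 1 else 0 := by
  classical
  rw [← Finpartition.ncSum_catalanWeight ((isNonCrossing_iff_nonCrossing σ).mp hσ),
    Finpartition.ncSum, ← finsum_mem_coe_finset]
  congr
  ext τ
  simp [isNonCrossing_iff_nonCrossing]

/-- The Möbius function of `NC(n)` evaluated from the minimal partition `0_n = ⊥`
(singletons) to the maximal partition `1_n = ⊤` (one block) equals
`(−1)^{n−1} C_{n−1}`, where `C_{n−1} = (1/n)·binom(2(n−1), n−1)` is a Catalan number. -/
theorem moebiusNC_bot_top {n : ℕ} (hn : 1 ≤ n)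
    (μ : Finpartition (Finset.univ : Finset (Fin n)) →
         Finpartition (Finset.univ : Finset (Fin n)) → ℂ)
    (hμ : IsMoebiusNC n μ) :
    μ ⊥ ⊤ = (-1 : ℂ) ^ (n - 1) * ((Nat.choose (2 * (n - 1)) (n - 1) : ℂ) / (n : ℂ)) := by
  have htop : IsNonCrossing (⊤ : Finpartition (Finset.univ : Finset (Fin n))) :=
    (isNonCrossing_iff_nonCrossing ⊤).mpr Finpartition.nonCrossing_top
  have hμ_eq_weight := eq_of_forall_finsum_mem_eq (f := μ ⊥)
    (g := fun σ => σ.weight fun k => (catalanWeight k : ℂ))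
    (fun σ hσ _ => by rw [hμ.finsum_mem_eq hσ, finsum_mem_weight_catalanWeight hσ]) ⊤ htop bot_le
  rw [hμ_eq_weight, Finpartition.weight_top _ ⟨⟨0, hn⟩, mem_univ _⟩, card_univ, Fintype.card_fin,
    catalanWeight_eq_choose_div hn]
end

section
/- (Stieltjes inversion formula.) Let μ be a probability measure on ℝ with Cauchy transform G_μ. Then for all real numbers a < b: lim_{ε→0⁺} ( −(1/π) ∫_a^b Im G_μ(x + iε) dx ) = μ((a, b)) + ½ μ({a}) + ½ μ({b}). In particular, if ν is another probability measure on ℝ with G_μ(z) = G_ν(z) for all z ∈ ℂ⁺, then μ = ν. -/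
open MeasureTheory Filter Complex

/-- The Cauchy transform `G_μ(z) = ∫ (z − t)⁻¹ dμ(t)` of a measure `μ` on `ℝ`. -/
noncomputable def cauchyTransform (μ : Measure ℝ) (z : ℂ) : ℂ :=
  ∫ t : ℝ, (z - (t : ℂ))⁻¹ ∂μ

/-! For `ε > 0`, `-Im G_μ(x + iε) = ∫ ε / ((x - t)² + ε²) dμ(t)` is `π` times the Poisson
smoothing of `μ`. Integrating over `x ∈ [a, b]` and swapping the integrals (Fubini) turns the
left-hand side of the formula into `∫ (arctan ((b - t)/ε) - arctan ((a - t)/ε)) / π dμ(t)`. The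
integrand is bounded by `1` and tends to `(sign (b - t) - sign (a - t)) / 2`, which is `1` on
`(a, b)`, `1/2` at `a` and `b` and `0` elsewhere, so dominated convergence gives the formula.

For uniqueness, off the countably many atoms of `μ` and `ν` the formula reads
`μ (a, b] = ν (a, b]`, and such intervals, with endpoints in the dense complement of the atoms,
form a π-system generating the Borel σ-algebra. -/

open Set Topology

theorem im_inv_ofReal_add_mul_I_sub (x ε t : ℝ) :
    ((x + ε * I - t : ℂ)⁻¹).im = -(ε / ((x - t) ^ 2 + ε ^ 2)) := by
  have h_normSq : normSq (x + ε * I - t) = (x - t) ^ 2 + ε ^ 2 := by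
    simp only [normSq_apply, sub_re, add_re, ofReal_re, mul_re, I_re, I_im, ofReal_im, sub_im,
      add_im, mul_im]
    ring
  simp [inv_im, h_normSq, neg_div]

theorem norm_inv_sub_ofReal_le {z : ℂ} (hz : 0 < z.im) (t : ℝ) : ‖(z - t)⁻¹‖ ≤ z.im⁻¹ := by
  rw [norm_inv]
  refine inv_anti₀ hz ?_
  simpa using (le_abs_self _).trans (abs_im_le_norm (z - t))

theorem integrable_inv_sub_ofReal (μ : Measure ℝ) [IsFiniteMeasure μ] {z : ℂ} (hz : 0 < z.im) :
    Integrable (fun t : ℝ => (z - t)⁻¹) μ := by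
  have h_ne : ∀ t : ℝ, z - t ≠ 0 := fun t h => by
    simpa [hz.ne'] using congrArg im h
  refine (integrable_const z.im⁻¹).mono' ?_ (.of_forall (norm_inv_sub_ofReal_le hz))
  exact (Continuous.inv₀ (by fun_prop) h_ne).aestronglyMeasurable

theorem im_cauchyTransform_ofReal_add_mul_I (μ : Measure ℝ) [IsFiniteMeasure μ] (x : ℝ) {ε : ℝ}
    (hε : 0 < ε) : (cauchyTransform μ (x + ε * I)).im = -∫ t, ε / ((x - t) ^ 2 + ε ^ 2) ∂μ := by
  have h_int := integrable_inv_sub_ofReal μ (z := x + ε * I) (by simpa using hε)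
  rw [cauchyTransform, ← integral_neg, ← imCLM_apply, ← imCLM.integral_comp_comm h_int]
  simp only [imCLM_apply, im_inv_ofReal_add_mul_I_sub]

theorem integral_poisson_eq_arctan_sub (t : ℝ) {ε : ℝ} (hε : 0 < ε) (a b : ℝ) :
    ∫ x in a..b, ε / ((x - t) ^ 2 + ε ^ 2) =
      Real.arctan ((b - t) / ε) - Real.arctan ((a - t) / ε) := by
  refine intervalIntegral.integral_eq_sub_of_hasDerivAt (f := fun x => Real.arctan ((x - t) / ε))
    (fun x _ => ?_) ?_
  · refine ((Real.hasDerivAt_arctan _).comp x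
      (((hasDerivAt_id' x).sub_const t).div_const ε)).congr_deriv ?_
    field_simp
    ring
  · exact (continuous_const.div (by fun_prop) fun x => by positivity).intervalIntegrable _ _

theorem integral_integral_poisson_eq_integral_arctan_sub (μ : Measure ℝ) [IsFiniteMeasure μ]
    {a b ε : ℝ} (hab : a ≤ b) (hε : 0 < ε) :
    ∫ x in a..b, ∫ t, ε / ((x - t) ^ 2 + ε ^ 2) ∂μ =
      ∫ t, (Real.arctan ((b - t) / ε) - Real.arctan ((a - t) / ε)) ∂μ := by
  have h_cont : Continuous fun p : ℝ × ℝ => ε / ((p.1 - p.2) ^ 2 + ε ^ 2) :=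
    continuous_const.div (by fun_prop) fun p => by positivity
  have h_bound (p : ℝ × ℝ) : ‖ε / ((p.1 - p.2) ^ 2 + ε ^ 2)‖ ≤ ε / ε ^ 2 := by
    rw [Real.norm_of_nonneg (by positivity)]
    gcongr
    nlinarith [sq_nonneg (p.1 - p.2)]
  have h_int : Integrable (fun p : ℝ × ℝ => ε / ((p.1 - p.2) ^ 2 + ε ^ 2))
      ((volume.restrict (Ioc a b)).prod μ) :=
    (integrable_const _).mono' h_cont.aestronglyMeasurable (.of_forall h_bound)
  rw [intervalIntegral.integral_of_le hab, integral_integral_swap h_int]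
  congr 1 with t
  rw [← intervalIntegral.integral_of_le hab, integral_poisson_eq_arctan_sub t hε]

theorem neg_inv_pi_mul_integral_im_cauchyTransform (μ : Measure ℝ) [IsFiniteMeasure μ] {a b ε : ℝ}
    (hab : a ≤ b) (hε : 0 < ε) :
    -(1 / Real.pi) * ∫ x in a..b, (cauchyTransform μ (x + ε * I)).im =
      ∫ t, (Real.arctan ((b - t) / ε) - Real.arctan ((a - t) / ε)) / Real.pi ∂μ := by
  simp only [im_cauchyTransform_ofReal_add_mul_I μ _ hε, intervalIntegral.integral_neg,
    integral_integral_poisson_eq_integral_arctan_sub μ hab hε, integral_div]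
  ring

theorem tendsto_arctan_div_nhdsGT_zero (c : ℝ) :
    Tendsto (fun ε => Real.arctan (c / ε)) (𝓝[>] 0) (𝓝 (Real.pi / 2 * Real.sign c)) := by
  have h_pos {c : ℝ} (hc : 0 < c) :
      Tendsto (fun ε => Real.arctan (c / ε)) (𝓝[>] 0) (𝓝 (Real.pi / 2)) :=
    Real.tendsto_arctan_atTop.mono_right nhdsWithin_le_nhds |>.comp
      (tendsto_inv_nhdsGT_zero.const_mul_atTop hc)
  rcases lt_trichotomy c 0 with hc | rfl | hc
  · simpa [Real.sign_of_neg hc, neg_div, Real.arctan_neg] using (h_pos (neg_pos.2 hc)).neg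
  · simp [Real.sign_zero]
  · simpa [Real.sign_of_pos hc] using h_pos hc

theorem tendsto_arctan_sub_arctan_div_pi (a b t : ℝ) :
    Tendsto (fun ε => (Real.arctan ((b - t) / ε) - Real.arctan ((a - t) / ε)) / Real.pi) (𝓝[>] 0)
      (𝓝 ((Real.sign (b - t) - Real.sign (a - t)) / 2)) := by
  convert ((tendsto_arctan_div_nhdsGT_zero _).sub (tendsto_arctan_div_nhdsGT_zero _)).div_const
    Real.pi using 2
  field_simp

theorem abs_arctan_sub_arctan_le_pi (x y : ℝ) : |Real.arctan x - Real.arctan y| ≤ Real.pi := by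
  have := Real.arctan_lt_pi_div_two x
  have := Real.neg_pi_div_two_lt_arctan x
  have := Real.arctan_lt_pi_div_two y
  have := Real.neg_pi_div_two_lt_arctan y
  rw [abs_le]
  constructor <;> linarith

noncomputable def intervalWeight (a b t : ℝ) : ℝ :=
  (Ioo a b).indicator (fun _ => 1) t + ({a} : Set ℝ).indicator (fun _ => 1 / 2) t +
    ({b} : Set ℝ).indicator (fun _ => 1 / 2) t

theorem sign_sub_sign_div_two_eq_intervalWeight {a b : ℝ} (hab : a < b) (t : ℝ) :
    (Real.sign (b - t) - Real.sign (a - t)) / 2 = intervalWeight a b t := by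
  rcases lt_trichotomy t a with h | rfl | h
  · simp [intervalWeight, Real.sign_of_pos, h, h.trans hab, h.ne, (h.trans hab).ne, h.not_gt]
  · simp [intervalWeight, Real.sign_of_pos, hab, hab.ne]
  rcases lt_trichotomy t b with h' | rfl | h'
  · simp [intervalWeight, Real.sign_of_pos, Real.sign_of_neg, h, h', h.ne', h'.ne]
  · simp [intervalWeight, Real.sign_of_neg, hab, hab.ne']
  · simp [intervalWeight, Real.sign_of_neg, h', hab.trans h', h'.ne', (hab.trans h').ne', h'.not_gt]

theorem integral_intervalWeight (μ : Measure ℝ) [IsFiniteMeasure μ] (a b : ℝ) :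
    ∫ t, intervalWeight a b t ∂μ =
      (μ (Ioo a b)).toReal + (μ {a}).toReal / 2 + (μ {b}).toReal / 2 := by
  have h_int (s : Set ℝ) (hs : MeasurableSet s) (c : ℝ) :
      Integrable (s.indicator fun _ => c) μ := (integrable_const c).indicator hs
  simp only [intervalWeight]
  rw [integral_add ?_ (h_int _ (.singleton b) _),
    integral_add (h_int _ measurableSet_Ioo 1) (h_int _ (.singleton a) _)]
  · rw [integral_indicator_const _ measurableSet_Ioo, integral_indicator_const _ (.singleton a),
      integral_indicator_const _ (.singleton b)]
    simp only [measureReal_def, smul_eq_mul]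
    ring
  · exact (h_int _ measurableSet_Ioo 1).add (h_int _ (.singleton a) _)

theorem tendsto_neg_inv_pi_mul_integral_im_cauchyTransform (μ : Measure ℝ) [IsFiniteMeasure μ]
    {a b : ℝ} (hab : a < b) :
    Tendsto (fun ε : ℝ => -(1 / Real.pi) * ∫ x in a..b, (cauchyTransform μ (x + ε * I)).im)
      (𝓝[>] 0) (𝓝 ((μ (Ioo a b)).toReal + (μ {a}).toReal / 2 + (μ {b}).toReal / 2)) := by
  have h_lim : Tendsto
      (fun ε => ∫ t, (Real.arctan ((b - t) / ε) - Real.arctan ((a - t) / ε)) / Real.pi ∂μ)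
      (𝓝[>] 0) (𝓝 (∫ t, (Real.sign (b - t) - Real.sign (a - t)) / 2 ∂μ)) := by
    refine tendsto_integral_filter_of_dominated_convergence (fun _ => 1)
      (.of_forall fun ε => by fun_prop) (.of_forall fun ε => .of_forall fun t => ?_)
      (integrable_const 1) (.of_forall (tendsto_arctan_sub_arctan_div_pi a b))
    rw [Real.norm_eq_abs, abs_div, abs_of_pos Real.pi_pos, div_le_one Real.pi_pos]
    exact abs_arctan_sub_arctan_le_pi _ _
  simp only [sign_sub_sign_div_two_eq_intervalWeight hab, integral_intervalWeight] at h_lim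
  refine h_lim.congr' ?_
  filter_upwards [self_mem_nhdsWithin] with ε hε
  exact (neg_inv_pi_mul_integral_im_cauchyTransform μ hab.le hε).symm

theorem countable_setOf_measure_singleton_ne_zero {α : Type*} [MeasurableSpace α]
    [MeasurableSingletonClass α] (μ : Measure α) [SFinite μ] : {x : α | μ {x} ≠ 0}.Countable := by
  simpa only [pos_iff_ne_zero] using Measure.countable_meas_pos_of_disjoint_iUnion (μ := μ)
    (As := fun x => {x}) (fun _ => .singleton _) fun _ _ h => disjoint_singleton.2 h

theorem ext_of_Ioc_of_countable {D : Set ℝ} (hD : D.Countable) (μ ν : Measure ℝ) [IsFiniteMeasure μ]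
    (h_univ : μ univ = ν univ) (h : ∀ l ∈ Dᶜ, ∀ u ∈ Dᶜ, l < u → μ (Ioc l u) = ν (Ioc l u)) :
    μ = ν :=
  ext_of_generate_finite _
    (BorelSpace.measurable_eq.trans (hD.dense_compl ℝ).borel_eq_generateFrom_Ioc_mem)
    (isPiSystem_Ioc_mem _ _) (by rintro - ⟨l, hl, u, hu, hlu, rfl⟩; exact h l hl u hu hlu) h_univ

theorem ext_of_Ioo_add_half_singleton (μ ν : Measure ℝ) [IsFiniteMeasure μ] [IsFiniteMeasure ν]
    (h_univ : μ univ = ν univ)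
    (h : ∀ a b : ℝ, a < b →
      (μ (Ioo a b)).toReal + (μ {a}).toReal / 2 + (μ {b}).toReal / 2 =
        (ν (Ioo a b)).toReal + (ν {a}).toReal / 2 + (ν {b}).toReal / 2) :
    μ = ν := by
  refine ext_of_Ioc_of_countable ((countable_setOf_measure_singleton_ne_zero μ).union
    (countable_setOf_measure_singleton_ne_zero ν)) μ ν h_univ fun l hl u hu hlu => ?_
  simp only [mem_compl_iff, mem_union, mem_ofPred_eq, not_or, not_not] at hl hu
  have h_Ioo := h l u hlu
  simp only [hl, hu, ENNReal.toReal_zero, zero_div, add_zero] at h_Ioo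
  rw [← measure_congr (Ioo_ae_eq_Ioc' hu.1), ← measure_congr (Ioo_ae_eq_Ioc' hu.2)]
  exact (ENNReal.toReal_eq_toReal_iff' (measure_ne_top μ _) (measure_ne_top ν _)).1 h_Ioo

/-- The Stieltjes inversion formula: for a probability measure `μ` on `ℝ` and reals
`a < b`, `lim_{ε↓0} −(1/π) ∫_a^b Im G_μ(x+iε) dx = μ((a,b)) + μ({a})/2 + μ({b})/2`.
In particular two probability measures with the same Cauchy transform on the upper
half-plane coincide. -/
theorem stieltjes_inversion (μ : Measure ℝ) [IsProbabilityMeasure μ] :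
    (∀ a b : ℝ, a < b →
      Tendsto
        (fun ε : ℝ =>
          -(1 / Real.pi) * ∫ x in a..b, (cauchyTransform μ (x + ε * Complex.I)).im)
        (nhdsWithin 0 (Set.Ioi 0))
        (nhds ((μ (Set.Ioo a b)).toReal + (μ {a}).toReal / 2 + (μ {b}).toReal / 2))) ∧
    (∀ ν : Measure ℝ, IsProbabilityMeasure ν →
      (∀ z : ℂ, 0 < z.im → cauchyTransform μ z = cauchyTransform ν z) → μ = ν) := by
  refine ⟨fun a b hab => tendsto_neg_inv_pi_mul_integral_im_cauchyTransform μ hab,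
    fun ν _ hG => ext_of_Ioo_add_half_singleton μ ν (by simp) fun a b hab => ?_⟩
  refine tendsto_nhds_unique (tendsto_neg_inv_pi_mul_integral_im_cauchyTransform μ hab)
    ((tendsto_neg_inv_pi_mul_integral_im_cauchyTransform ν hab).congr' ?_)
  filter_upwards [self_mem_nhdsWithin] with ε (hε : 0 < ε)
  have h_eq (x : ℝ) : cauchyTransform μ (x + ε * I) = cauchyTransform ν (x + ε * I) :=
    hG _ (by simpa using hε)
  simp only [h_eq]
end
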